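/- arXiv:1410.5000 — 4 statements merged into one kernel-verified Lean document; each statement's English description precedes it below -/
import Mathlib

section
/- There is a polynomial p such that for every n ≥ 1 there exists a nondeterministic finite automaton over the alphabet {0,1} with at most p(n) states whose accepted language is exactly { u ++ v : u, v ∈ {0,1}^n and val(v) ≠ val(u) + 1 }, where val(x) denotes the natural number whose big-endian binary representation (most significant bit first) is x. -/
/-!
Writing `u` big-endian, `v = u + 1` (with `v` of the same length) holds iff `u` contains a `0`
and bit `t` of `v` differs from bit `t` of `u` exactly when all later (less significant) bits
of `u` are `1`, i.e. when the carry reaches position `t`. Hence `bval v ≠ bval u + 1` iff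
`u = 1⋯1` or some single position `t` violates this rule, which is witnessed by the bits of
`u ++ v` at no more than three fixed positions (plus a run of `1`s). There are `O(n²)` such
witnesses; an NFA guesses one and verifies it with a position counter of size `2n + 1`,
for `O(n³)` states in total.
-/

/-- The natural number whose big-endian binary representation
(most significant bit first) is `x`. -/
def bval (x : List Bool) : ℕ :=
  x.foldl (fun acc b => 2 * acc + (if b then 1 else 0)) 0

theorem bval_append_singleton (x : List Bool) (b : Bool) :
    bval (x ++ [b]) = 2 * bval x + b.toNat := by
  cases b <;> simp [bval]

theorem bval_inj {x y : List Bool} (h : x.length = y.length) : bval x = bval y ↔ x = y := by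
  refine ⟨fun hxy => ?_, congrArg bval⟩
  induction x using List.reverseRecOn generalizing y with
  | nil => simpa [eq_comm] using h
  | append_singleton x b ih =>
    rcases y.eq_nil_or_concat' with rfl | ⟨y, c, rfl⟩
    · simp at h
    simp only [List.length_append, List.length_singleton, Nat.add_right_cancel_iff] at h
    rw [bval_append_singleton, bval_append_singleton] at hxy
    obtain ⟨hval, rfl⟩ : bval x = bval y ∧ b = c := by
      cases b <;> cases c <;> simp at hxy ⊢ <;> omega
    rw [ih h hval]

theorem bval_eq_bval_add_one_iff {u v : List Bool} (h : v.length = u.length) :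
    bval v = bval u + 1 ↔ false ∈ u ∧
      ∀ t < u.length, (v[t]? ≠ u[t]? ↔ ∀ s < u.length, t < s → u[s]? ≠ some false) := by
  induction u using List.reverseRecOn generalizing v with
  | nil => obtain rfl := List.length_eq_zero_iff.mp h; simp [bval]
  | append_singleton u b ih =>
    rcases v.eq_nil_or_concat' with rfl | ⟨v, c, rfl⟩
    · simp at h
    simp only [List.length_append, List.length_singleton, Nat.add_right_cancel_iff] at h
    have hc : (v ++ [c])[u.length]? = some c := h ▸ List.getElem?_concat_length
    simp +contextual only [List.length_append, List.length_singleton, Nat.forall_lt_succ_right,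
      List.getElem?_append_left, h, List.getElem?_concat_length, hc, lt_irrefl, Nat.lt_asymm,
      bval_append_singleton, List.mem_append, List.mem_singleton, IsEmpty.forall_iff,
      implies_true, and_true]
    cases b <;> cases c
    · simp; omega
    · simp [bval_inj h, List.ext_getElem?_iff', h]
    · simp [← ih h]; omega
    · simp; omega

theorem bval_ne_bval_add_one_iff {u v : List Bool} (h : v.length = u.length) :
    bval v ≠ bval u + 1 ↔ (∀ t < u.length, u[t]? ≠ some false) ∨
      (∃ t < u.length, v[t]? ≠ u[t]? ∧ ∃ s < u.length, t < s ∧ u[s]? = some false) ∨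
      (∃ t < u.length, v[t]? = u[t]? ∧ ∀ s < u.length, t < s → u[s]? ≠ some false) := by
  have hmem : false ∉ u ↔ ∀ t < u.length, u[t]? ≠ some false := by
    simp [List.mem_iff_getElem, List.getElem?_eq_some_iff]
  rw [ne_eq, bval_eq_bval_add_one_iff h, not_and_or, hmem, ← exists_or]
  push Not
  exact or_congr_right (exists_congr fun _ => and_or_left)

theorem List.forall_lt_length_append_iff {α : Type*} {u v : List α} {P : ℕ → Option α → Prop} :
    (∀ t < (u ++ v).length, P t (u ++ v)[t]?) ↔
      (∀ t < u.length, P t u[t]?) ∧ ∀ t < v.length, P (u.length + t) v[t]? := by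
  refine ⟨fun h => ⟨fun t ht => ?_, fun t ht => ?_⟩, fun ⟨hu, hv⟩ t ht => ?_⟩
  · simpa [List.getElem?_append_left ht] using h t (by simp; omega)
  · simpa [List.getElem?_append_right] using h (u.length + t) (by simp; omega)
  · by_cases htu : t < u.length
    · simpa [List.getElem?_append_left htu] using hu t htu
    · obtain ⟨s, rfl⟩ := Nat.exists_eq_add_of_le (not_lt.mp htu)
      simpa [List.getElem?_append_right] using hv s (by simp at ht; omega)

section PositionalNFA

variable {α ι : Type*} {m : ℕ} {A : ι → ℕ → α → Prop}

def positionalNFA (m : ℕ) (A : ι → ℕ → α → Prop) : NFA α (ι × Fin (m + 1)) where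
  step p a := {q | q.1 = p.1 ∧ (q.2 : ℕ) = p.2 + 1 ∧ A p.1 p.2 a}
  start := {p | (p.2 : ℕ) = 0}
  accept := {p | (p.2 : ℕ) = m}

theorem positionalNFA_eval (x : List α) :
    (positionalNFA m A).eval x =
      {p | (p.2 : ℕ) = x.length ∧ ∀ t (h : t < x.length), A p.1 t x[t]} := by
  induction x using List.reverseRecOn with
  | nil => ext p; simp [positionalNFA]
  | append_singleton x a ih =>
    ext ⟨i, k⟩
    rw [NFA.eval_append_singleton, ih]
    simp only [NFA.mem_stepSet, positionalNFA, Set.mem_ofPred_eq, List.length_append,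
      List.length_singleton, Prod.exists]
    constructor
    · rintro ⟨j, l, ⟨hl, hx⟩, rfl, hk, ha⟩
      refine ⟨by omega, fun t ht => ?_⟩
      rcases Nat.lt_succ_iff_lt_or_eq.mp ht with ht | rfl
      · simpa [List.getElem_append_left ht] using hx t ht
      · simpa [← hl] using ha
    · rintro ⟨hk, hx⟩
      refine ⟨i, ⟨x.length, by omega⟩, ⟨rfl, fun t ht => ?_⟩, rfl, hk, ?_⟩
      · simpa [List.getElem_append_left ht] using hx t (by omega)
      · simpa using hx x.length (by omega)

theorem positionalNFA_accepts :
    (positionalNFA m A).accepts = {x | x.length = m ∧ ∃ i, ∀ t (h : t < x.length), A i t x[t]} := by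
  ext x
  simp only [NFA.accepts, positionalNFA_eval, Set.mem_ofPred_eq, Prod.exists]
  constructor
  · rintro ⟨i, k, hk, hkx, hx⟩
    exact ⟨hkx ▸ hk, i, hx⟩
  · rintro ⟨rfl, i, hx⟩
    exact ⟨i, Fin.last _, rfl, rfl, hx⟩

end PositionalNFA

/-- `none`: `u = 1⋯1`; `inl ⟨(t, s), c⟩`: bit `t` flips although `u` has a `0` at `s > t`;
`inr (t, c)`: bit `t` does not flip although all bits of `u` after `t` are `1`.
In both cases `c` is the bit of `u` at `t`, guessed so that all constraints are on single positions. -/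
abbrev NotSuccWitness (n : ℕ) : Type :=
  Option ({p : Fin n × Fin n // p.1 < p.2} × Bool ⊕ Fin n × Bool)

namespace NotSuccWitness

variable {n : ℕ}

def leftConstraint : NotSuccWitness n → ℕ → Option Bool → Prop
  | none => fun _ o => o ≠ some false
  | some (.inl (⟨(t, s), _⟩, c)) => fun i o => (i = t → o = some c) ∧ (i = s → o = some false)
  | some (.inr (t, c)) => fun i o => (i = t → o = some c) ∧ (t < i → o ≠ some false)

def rightConstraint : NotSuccWitness n → ℕ → Option Bool → Prop
  | none => fun _ _ => True
  | some (.inl (⟨(t, _), _⟩, c)) => fun i o => i = t → o = some !c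
  | some (.inr (t, c)) => fun i o => i = t → o = some c

def constraint (w : NotSuccWitness n) (t : ℕ) (o : Option Bool) : Prop :=
  if t < n then w.leftConstraint t o else w.rightConstraint (t - n) o

theorem card_le : Fintype.card (NotSuccWitness n) ≤ 2 * n ^ 2 + 2 * n + 1 := by
  have := Fintype.card_subtype_le fun p : Fin n × Fin n => p.1 < p.2
  simp only [Fintype.card_option, Fintype.card_sum, Fintype.card_prod, Fintype.card_fin,
    Fintype.card_bool] at this ⊢
  nlinarith

theorem exists_iff_bval_ne {u v : List Bool} (hu : u.length = n) (hv : v.length = n) :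
    (∃ w : NotSuccWitness n,
      (∀ t < n, w.leftConstraint t u[t]?) ∧ ∀ t < n, w.rightConstraint t v[t]?) ↔
      bval v ≠ bval u + 1 := by
  rw [bval_ne_bval_add_one_iff (hv.trans hu.symm), hu]
  simp +contextual only [Option.exists, Sum.exists, Prod.exists, Subtype.exists, Fin.exists_iff,
    leftConstraint, rightConstraint, forall_and, imp.swap (a := _ < n), forall_eq, Fin.mk_lt_mk,
    forall_const, implies_true, and_true, exists_prop]
  refine or_congr Iff.rfl (or_congr (exists_congr fun t => ?_) (exists_congr fun t => ?_)) <;>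
  · by_cases ht : t < n
    · rw [List.getElem?_eq_getElem (hu ▸ ht), List.getElem?_eq_getElem (hv ▸ ht)]
      cases u[t] <;> cases v[t] <;> simp [ht]
    · simp [ht]

theorem forall_constraint_append_iff {u v : List Bool} {w : NotSuccWitness n}
    (hu : u.length = n) (hv : v.length = n) :
    (∀ t < (u ++ v).length, w.constraint t (u ++ v)[t]?) ↔
      (∀ t < n, w.leftConstraint t u[t]?) ∧ ∀ t < n, w.rightConstraint t v[t]? := by
  rw [List.forall_lt_length_append_iff, hu, hv]
  simp +contextual [constraint]

end NotSuccWitness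

theorem positionalNFA_notSuccWitness_accepts (n : ℕ) :
    (positionalNFA (2 * n) fun (w : NotSuccWitness n) t a => w.constraint t (some a)).accepts =
      {x : List Bool | ∃ u v : List Bool,
        x = u ++ v ∧ u.length = n ∧ v.length = n ∧ bval v ≠ bval u + 1} := by
  have hget (x : List Bool) (w : NotSuccWitness n) :
      (∀ t (h : t < x.length), w.constraint t (some x[t])) ↔
        ∀ t < x.length, w.constraint t x[t]? :=
    forall₂_congr fun t h => by rw [List.getElem?_eq_getElem h]
  ext x
  simp only [positionalNFA_accepts, hget]
  constructor
  · rintro ⟨hx, w, hw⟩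
    have hu : (x.take n).length = n := by simp; omega
    have hv : (x.drop n).length = n := by simp; omega
    refine ⟨x.take n, x.drop n, (List.take_append_drop n x).symm, hu, hv, ?_⟩
    rw [← NotSuccWitness.exists_iff_bval_ne hu hv]
    rw [← List.take_append_drop n x] at hw
    exact ⟨w, (NotSuccWitness.forall_constraint_append_iff hu hv).mp hw⟩
  · rintro ⟨u, v, rfl, hu, hv, hne⟩
    obtain ⟨w, hw⟩ := (NotSuccWitness.exists_iff_bval_ne hu hv).mpr hne
    exact ⟨by simp; omega, w, (NotSuccWitness.forall_constraint_append_iff hu hv).mpr hw⟩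

/-- There is a polynomial `p` such that for every `n ≥ 1` there
is an NFA over `{0,1}` with at most `p n` states accepting exactly
`{ u ++ v : u, v ∈ {0,1}^n, bval v ≠ bval u + 1 }`. -/
theorem succ_mismatch_nfa :
    ∃ p : Polynomial ℕ, ∀ n : ℕ, 1 ≤ n →
      ∃ (σ : Type) (instσ : Fintype σ) (M : NFA Bool σ),
        @Fintype.card σ instσ ≤ p.eval n ∧
        M.accepts = {x : List Bool | ∃ u v : List Bool,
          x = u ++ v ∧ u.length = n ∧ v.length = n ∧ bval v ≠ bval u + 1} := by
  open Polynomial in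
  refine ⟨(2 * X ^ 2 + 2 * X + 1) * (2 * X + 1), fun n _ =>
    ⟨_, inferInstance, _, ?_, positionalNFA_notSuccWitness_accepts n⟩⟩
  rw [Fintype.card_prod, Fintype.card_fin]
  simpa using Nat.mul_le_mul_right (2 * n + 1) NotSuccWitness.card_le
end

section
/- Let Q be a finite set of Turing-machine states and let Γ = {0, 1, ▷, □, $, ↵, ;, :} ∪ Q (all nine kinds of symbols distinct, Q disjoint from the other eight symbols). There is a polynomial p (independent of Q and N) such that for every N ≥ 1 there exists an NFA over Γ with at most p(N + |Q|) states whose accepted language is exactly the set of words over Γ containing a factor of the form u : x ; v where u, v ∈ {0,1}^N, x is either a single bit c ∈ {0,1} or a state symbol followed by a bit (q c with q ∈ Q, c ∈ {0,1}), and val(v) ≠ val(u) + 1 (val denoting the big-endian binary value of an N-bit string). -/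
namespace Paper

/-- The encoding alphabet `Γ = {0, 1, ▷, □, $, ↵, ;, :} ∪ Q`
(nine kinds of symbols, all distinct). -/
inductive Sym (Q : Type) where
  | bit (b : Bool)   -- the two bit symbols 0 and 1
  | ltri             -- ▷
  | sq               -- □
  | dollar           -- $
  | newline          -- ↵
  | semi             -- ;
  | colon            -- :
  | state (q : Q)    -- the state symbols
  deriving DecidableEq

/-- Big-endian binary value of a bit string (most significant bit first). -/
def bval (x : List Bool) : ℕ :=
  x.foldl (fun acc b => 2 * acc + (if b then 1 else 0)) 0

/-- A cell content: either a single bit, or a state symbol followed by a bit. -/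
def IsCellContent {Q : Type} (x : List (Sym Q)) : Prop :=
  (∃ c : Bool, x = [Sym.bit c]) ∨ (∃ (q : Q) (c : Bool), x = [Sym.state q, Sym.bit c])

/-!
Bit `i` of `bval u + 1` is `u[i]` xor the carry into position `i`, and that carry is `1` iff
all later bits of `u` are `1`; the sum overflows `N` bits iff `u = 1^N`. Hence `bval v ≠ bval u + 1`
iff `u = 1^N`, or `v` disagrees with this rule at some position `i`, where a zero carry is
witnessed by a `0` of `u` at some later position. For fixed positions, each case (together with
the shape of the cell content) is a pattern prescribing a set of admissible symbols at every
position of the factor `u : x ; v`. There are `O(N²)` such patterns of length `O(N)`, and an NFA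
guesses the pattern and the start of the factor and then checks it symbol by symbol.
-/

open List

theorem bval_append_singleton (l : List Bool) (b : Bool) :
    bval (l ++ [b]) = 2 * bval l + b.toNat := by
  cases b <;> simp [bval]

theorem bval_append (x y : List Bool) : bval (x ++ y) = bval x * 2 ^ y.length + bval y := by
  induction y using reverseRecOn with
  | nil => simp [bval]
  | append_singleton y b ih =>
    rw [← append_assoc, bval_append_singleton, bval_append_singleton, ih, length_append,
      length_singleton, pow_succ]
    ring

theorem bval_append_cons (a t : List Bool) (b : Bool) :
    bval (a ++ b :: t) = (2 * bval a + b.toNat) * 2 ^ t.length + bval t := by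
  rw [← singleton_append, ← append_assoc, bval_append, bval_append_singleton]

theorem bval_lt (x : List Bool) : bval x < 2 ^ x.length := by
  induction x using reverseRecOn with
  | nil => simp [bval]
  | append_singleton x b ih =>
    rw [bval_append_singleton, length_append, length_singleton, pow_succ]
    have := Bool.toNat_le b
    omega

theorem bval_replicate_true_add_one (n : ℕ) : bval (replicate n true) + 1 = 2 ^ n := by
  induction n with
  | zero => simp [bval]
  | succ n ih =>
    rw [replicate_succ', bval_append_singleton, pow_succ, Bool.toNat_true]
    omega

theorem mul_two_pow_add_ne {x y s t r : ℕ} (hs : s < 2 ^ r) (ht : t < 2 ^ r)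
    (hxy : x % 2 ≠ y % 2) : x * 2 ^ r + s ≠ y * 2 ^ r + t := by
  intro h
  have key : ∀ z w, w < 2 ^ r → (z * 2 ^ r + w) / 2 ^ r = z := fun z w hw => by
    rw [add_comm, Nat.add_mul_div_right _ _ (by positivity), Nat.div_eq_of_lt hw, zero_add]
  exact hxy (by rw [← key x s hs, h, key y t ht])

/-- The ways in which `v` can differ from `u + 1` when both have the same length: `u + 1`
overflows, or `v` has the wrong bit right after `a`; that bit of `u + 1` is `!b` in case
`carry` and `b` in case `noCarry`. -/
inductive SuccMismatch : List Bool → List Bool → Prop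
  | overflow (n : ℕ) (v : List Bool) : SuccMismatch (replicate n true) v
  | carry {a v₁ : List Bool} (b : Bool) (r : ℕ) (v₂ : List Bool) (h : a.length = v₁.length) :
      SuccMismatch (a ++ b :: replicate r true) (v₁ ++ b :: v₂)
  | noCarry {a v₁ : List Bool} (b : Bool) (c d v₂ : List Bool) (h : a.length = v₁.length) :
      SuccMismatch (a ++ b :: (c ++ false :: d)) (v₁ ++ (!b) :: v₂)

namespace SuccMismatch

theorem snoc_true_false {u v : List Bool} (h : SuccMismatch u v) :
    SuccMismatch (u ++ [true]) (v ++ [false]) := by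
  cases h with
  | overflow n v => simpa [← replicate_succ'] using overflow (n + 1) (v ++ [false])
  | carry b r v₂ h => simpa [← replicate_succ'] using carry b (r + 1) (v₂ ++ [false]) h
  | noCarry b c d v₂ h => simpa using noCarry b c (d ++ [true]) (v₂ ++ [false]) h

theorem bval_ne {u v : List Bool} (h : SuccMismatch u v) (hlen : u.length = v.length) :
    bval v ≠ bval u + 1 := by
  cases h with
  | overflow n v =>
    have := bval_lt v
    have := bval_replicate_true_add_one n
    simp only [length_replicate] at hlen
    subst hlen
    omega
  | @carry a v₁ b r v₂ h =>
    have hr : v₂.length = r := by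
      simp only [length_append, length_cons, length_replicate] at hlen; omega
    have hsucc : (2 * bval a + b.toNat) * 2 ^ r + bval (replicate r true) + 1
        = (2 * bval a + b.toNat + 1) * 2 ^ r + 0 := by
      rw [add_assoc, bval_replicate_true_add_one]; ring
    rw [bval_append_cons, bval_append_cons, length_replicate, hr, hsucc]
    exact mul_two_pow_add_ne (hr ▸ bval_lt v₂) (by positivity) (by omega)
  | @noCarry a v₁ b c d v₂ h =>
    set w := c ++ false :: d
    have hr : v₂.length = w.length := by
      simp only [length_append, length_cons, w] at hlen ⊢; omega
    have hw : bval w + 1 < 2 ^ w.length := by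
      have := bval_lt c
      have := bval_lt d
      simp only [w, bval_append_cons, length_append, length_cons, pow_add, pow_succ,
        Bool.toNat_false, add_zero]
      nlinarith
    rw [bval_append_cons, bval_append_cons, hr, add_assoc]
    exact mul_two_pow_add_ne (hr ▸ bval_lt v₂) hw (by cases b <;> simp)

end SuccMismatch

theorem exists_eq_append_cons_not {u v : List Bool} (hlen : u.length = v.length) (hne : u ≠ v) :
    ∃ p b s t, u = p ++ b :: s ∧ v = p ++ (!b) :: t := by
  induction u generalizing v with
  | nil => simp_all [eq_comm]
  | cons x u ih =>
    obtain _ | ⟨y, v⟩ := v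
    · simp at hlen
    by_cases hxy : x = y
    · subst hxy
      obtain ⟨p, b, s, t, rfl, rfl⟩ := ih (by simpa using hlen) (by simpa using hne)
      exact ⟨x :: p, b, s, t, rfl, rfl⟩
    · exact ⟨[], x, u, v, rfl, by cases x <;> cases y <;> simp_all⟩

theorem succMismatch_of_bval_ne {u v : List Bool} (hlen : u.length = v.length)
    (h : bval v ≠ bval u + 1) : SuccMismatch u v := by
  induction u using reverseRecOn generalizing v with
  | nil =>
    obtain rfl : v = [] := by simpa [eq_comm] using hlen
    exact .overflow 0 []
  | append_singleton u x ih =>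
    obtain ⟨v, y, rfl⟩ : ∃ v' y, v = v' ++ [y] := by
      rcases eq_nil_or_concat v with rfl | h
      · simp at hlen
      · simpa using h
    simp only [length_append, length_singleton, add_left_inj] at hlen
    rw [bval_append_singleton, bval_append_singleton] at h
    cases x <;> cases y
    · exact .carry false 0 [] hlen
    · obtain ⟨p, b, s, t, rfl, rfl⟩ := exists_eq_append_cons_not hlen (by rintro rfl; simp at h)
      simpa using SuccMismatch.noCarry b s [] (t ++ [true]) rfl
    · exact (ih hlen (by simp only [Bool.toNat_false, Bool.toNat_true] at h; omega)).snoc_true_false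
    · exact .carry true 0 [] hlen

section Patterns

variable {α : Type*}

def Matches (m : List α) (p : List (Set α)) : Prop := Forall₂ (· ∈ ·) m p

theorem matches_nil_right {m : List α} : Matches m [] ↔ m = [] := forall₂_nil_right_iff

theorem matches_cons_right {m : List α} {S : Set α} {p : List (Set α)} :
    Matches m (S :: p) ↔ ∃ a m', m = a :: m' ∧ a ∈ S ∧ Matches m' p := by
  rw [Matches, forall₂_cons_right_iff]
  aesop

theorem matches_append_right {m : List α} {p q : List (Set α)} :
    Matches m (p ++ q) ↔ ∃ m₁ m₂, m = m₁ ++ m₂ ∧ Matches m₁ p ∧ Matches m₂ q := by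
  constructor
  · intro h
    exact ⟨m.take p.length, m.drop p.length, (take_append_drop _ m).symm,
      forall₂_take_append m p q h, forall₂_drop_append m p q h⟩
  · rintro ⟨m₁, m₂, rfl, h₁, h₂⟩
    exact rel_append h₁ h₂

theorem matches_replicate_univ {m : List α} {n : ℕ} :
    Matches m (replicate n Set.univ) ↔ m.length = n := by
  induction n generalizing m with
  | zero => simp [matches_nil_right]
  | succ n ih => cases m <;> simp [replicate_succ, matches_cons_right, ih]

theorem matches_replicate_singleton {m : List α} {n : ℕ} {a : α} :
    Matches m (replicate n {a}) ↔ m = replicate n a := by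
  induction n generalizing m with
  | zero => simp [matches_nil_right]
  | succ n ih => cases m <;> simp [replicate_succ, matches_cons_right, ih]

theorem matches_map_image {β : Type*} {f : β → α} {m : List α} {p : List (Set β)} :
    Matches m (p.map (f '' ·)) ↔ ∃ l, Matches l p ∧ m = l.map f := by
  induction p generalizing m with
  | nil => simp [matches_nil_right]
  | cons S p ih =>
    simp only [map_cons, matches_cons_right, ih]
    aesop

theorem cons_matches_drop {a : α} {m : List α} {p : List (Set α)} {k : ℕ} :
    Matches (a :: m) (p.drop k) ↔ (∃ S ∈ p[k]?, a ∈ S) ∧ Matches m (p.drop (k + 1)) := by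
  by_cases hk : k < p.length
  · rw [drop_eq_getElem_cons hk, getElem?_eq_getElem hk, Matches, forall₂_cons]
    simp [Matches]
  · simp [drop_of_length_le (not_lt.1 hk), drop_of_length_le (by omega : p.length ≤ k + 1),
      getElem?_eq_none (not_lt.1 hk), Matches]

end Patterns

theorem NFA.mem_acceptsFrom_iff_exists {α σ : Type*} {M : NFA α σ} {S : Set σ} {x : List α} :
    x ∈ M.acceptsFrom S ↔ ∃ s ∈ S, x ∈ M.acceptsFrom {s} := by
  simp only [NFA.mem_acceptsFrom, NFA.mem_evalFrom_iff_exists (S := S)]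
  aesop

section FactorNFA

variable {α I : Type*}

def FactorMatch (p : List (Set α)) (k : ℕ) (x : List α) : Prop :=
  ∃ pre m suf, x = pre ++ m ++ suf ∧ (k = 0 ∨ pre = []) ∧ Matches m (p.drop k)

theorem factorMatch_nil {p : List (Set α)} {k : ℕ} : FactorMatch p k [] ↔ p.length ≤ k := by
  simp [FactorMatch, Matches, ← drop_eq_nil_iff, eq_comm]

theorem factorMatch_cons {p : List (Set α)} {k : ℕ} {a : α} {x : List α} :
    FactorMatch p k (a :: x) ↔
      ((k = 0 ∨ p.length ≤ k) ∧ FactorMatch p k x) ∨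
        ((∃ S ∈ p[k]?, a ∈ S) ∧ FactorMatch p (k + 1) x) := by
  constructor
  · rintro ⟨_ | ⟨b, pre⟩, m, suf, hx, hpre, hm⟩
    · rcases m with _ | ⟨b, m⟩
      · have hk : p.length ≤ k := drop_eq_nil_iff.1 (forall₂_nil_left_iff.1 hm)
        exact .inl ⟨.inr hk, [], [], x, by simp, .inr rfl, hm⟩
      · obtain ⟨rfl, rfl⟩ : a = b ∧ x = m ++ suf := by simpa using hx
        obtain ⟨hS, hm⟩ := cons_matches_drop.1 hm
        exact .inr ⟨hS, [], m, suf, rfl, .inr rfl, hm⟩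
    · obtain ⟨rfl, rfl⟩ : a = b ∧ x = pre ++ m ++ suf := by simpa using hx
      have hk : k = 0 := by simpa using hpre
      exact .inl ⟨.inl hk, pre, m, suf, rfl, .inl hk, hm⟩
  · rintro (⟨hk | hk, pre, m, suf, rfl, hpre, hm⟩ | ⟨hS, pre, m, suf, rfl, hpre, hm⟩)
    · exact ⟨a :: pre, m, suf, rfl, .inl hk, hm⟩
    · obtain rfl : m = [] := by simpa [Matches, drop_of_length_le hk] using hm
      exact ⟨[], [], a :: (pre ++ suf), by simp, .inr rfl, hm⟩
    · obtain rfl : pre = [] := by simpa using hpre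
      exact ⟨[], a :: m, suf, rfl, .inr rfl, cons_matches_drop.2 ⟨hS, hm⟩⟩

/-- In state `(i, k)` the first `k` sets of `pat i` have been matched. The states `(i, 0)` loop
to skip the text before the factor, and completed matches loop to skip the text after it. -/
def factorNFA (pat : I → List (Set α)) (L : ℕ) : NFA α (I × Fin (L + 1)) where
  step s a := {t | t.1 = s.1 ∧
    (t.2 = s.2 ∧ ((s.2 : ℕ) = 0 ∨ (pat s.1).length ≤ s.2) ∨
      (t.2 : ℕ) = s.2 + 1 ∧ ∃ S ∈ (pat s.1)[(s.2 : ℕ)]?, a ∈ S)}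
  start := {s | (s.2 : ℕ) = 0}
  accept := {s | (pat s.1).length ≤ s.2}

variable {pat : I → List (Set α)} {L : ℕ}

theorem mem_acceptsFrom_factorNFA (hL : ∀ i, (pat i).length ≤ L) (s : I × Fin (L + 1))
    (x : List α) : x ∈ (factorNFA pat L).acceptsFrom {s} ↔ FactorMatch (pat s.1) s.2 x := by
  induction x generalizing s with
  | nil => simp [factorNFA, factorMatch_nil]
  | cons a x ih =>
    rw [NFA.cons_mem_acceptsFrom, NFA.stepSet_singleton, NFA.mem_acceptsFrom_iff_exists,
      factorMatch_cons]
    simp only [ih]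
    constructor
    · rintro ⟨⟨i, k⟩, ⟨rfl, ⟨rfl, hloop⟩ | ⟨hk, hS⟩⟩, hx⟩
      · exact .inl ⟨hloop, hx⟩
      · exact .inr ⟨hS, hk ▸ hx⟩
    · rintro (⟨hloop, hx⟩ | ⟨hS, hx⟩)
      · exact ⟨s, ⟨rfl, .inl ⟨rfl, hloop⟩⟩, hx⟩
      · have hk : (s.2 : ℕ) < (pat s.1).length := by
          obtain ⟨S, hS, -⟩ := hS
          exact (List.getElem?_eq_some_iff.1 hS).1
        exact ⟨(s.1, ⟨s.2 + 1, by have := hL s.1; omega⟩), ⟨rfl, .inr ⟨rfl, hS⟩⟩, hx⟩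

theorem mem_factorNFA_accepts (hL : ∀ i, (pat i).length ≤ L) {x : List α} :
    x ∈ (factorNFA pat L).accepts ↔ ∃ i pre m suf, x = pre ++ m ++ suf ∧ Matches m (pat i) := by
  rw [NFA.accepts_eq_acceptsFrom_start, NFA.mem_acceptsFrom_iff_exists]
  simp only [mem_acceptsFrom_factorNFA hL]
  simp [factorNFA, FactorMatch]

end FactorNFA

/-- A noncarry mismatch at position `i` is witnessed by a `0` of `u` at position `i + j + 1`. -/
abbrev MismatchIdx (N : ℕ) : Type :=
  Unit ⊕ (Fin N × Bool) ⊕ ({ij : Fin N × Fin N // (ij.1 : ℕ) + ij.2 + 2 ≤ N} × Bool)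

open Set in
def mismatchPattern (N : ℕ) : MismatchIdx N → List (Set Bool) × List (Set Bool)
  | .inl () => (replicate N {true}, replicate N univ)
  | .inr (.inl (i, b)) =>
    (replicate i univ ++ {b} :: replicate (N - 1 - i) {true},
      replicate i univ ++ {b} :: replicate (N - 1 - i) univ)
  | .inr (.inr (⟨(i, j), _⟩, b)) =>
    (replicate i univ ++ {b} :: (replicate j univ ++ {false} :: replicate (N - 2 - i - j) univ),
      replicate i univ ++ {!b} :: replicate (N - 1 - i) univ)

theorem mismatchPattern_length {N : ℕ} (k : MismatchIdx N) :
    (mismatchPattern N k).1.length = N ∧ (mismatchPattern N k).2.length = N := by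
  rcases k with ⟨⟩ | ⟨i, b⟩ | ⟨⟨⟨i, j⟩, hij : (i : ℕ) + j + 2 ≤ N⟩, b⟩ <;> refine ⟨?_, ?_⟩ <;>
    simp only [mismatchPattern, length_append, length_replicate, length_cons] <;> omega

theorem card_mismatchIdx_le (N : ℕ) : Fintype.card (MismatchIdx N) ≤ 1 + 2 * N + 2 * N ^ 2 := by
  have := Fintype.card_subtype_le fun ij : Fin N × Fin N => (ij.1 : ℕ) + ij.2 + 2 ≤ N
  simp only [Fintype.card_sum, Fintype.card_unit, Fintype.card_prod, Fintype.card_fin,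
    Fintype.card_bool] at this ⊢
  nlinarith

theorem succMismatch_of_matches_mismatchPattern {N : ℕ} {u v : List Bool} (k : MismatchIdx N)
    (hu : Matches u (mismatchPattern N k).1) (hv : Matches v (mismatchPattern N k).2) :
    u.length = N ∧ v.length = N ∧ SuccMismatch u v := by
  rcases k with ⟨⟩ | ⟨i, b⟩ | ⟨⟨⟨i, j⟩, hij⟩, b⟩ <;>
    simp only [mismatchPattern, matches_append_right, matches_cons_right,
      matches_replicate_univ, matches_replicate_singleton, Set.mem_singleton_iff] at hu hv
  · obtain rfl := hu
    exact ⟨length_replicate, hv, .overflow N v⟩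
  · obtain ⟨a, _, rfl, ha, _, _, rfl, rfl, rfl⟩ := hu
    obtain ⟨v₁, _, rfl, hv₁, _, v₂, rfl, rfl, hv₂⟩ := hv
    refine ⟨?_, ?_, .carry _ _ v₂ (ha.trans hv₁.symm)⟩ <;>
      simp only [length_append, length_cons, length_replicate] <;> omega
  · obtain ⟨a, _, rfl, ha, _, _, rfl, rfl, c, _, rfl, hc, _, _, rfl, rfl, hd⟩ := hu
    obtain ⟨v₁, _, rfl, hv₁, _, v₂, rfl, rfl, hv₂⟩ := hv
    refine ⟨?_, ?_, .noCarry _ c _ v₂ (ha.trans hv₁.symm)⟩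
    all_goals simp only [length_append, length_cons] at hij ⊢; omega

theorem exists_matches_mismatchPattern {N : ℕ} {u v : List Bool} (hu : u.length = N)
    (hv : v.length = N) (h : SuccMismatch u v) :
    ∃ k, Matches u (mismatchPattern N k).1 ∧ Matches v (mismatchPattern N k).2 := by
  cases h with
  | overflow n v =>
    rw [length_replicate] at hu
    subst hu
    exact ⟨.inl (), matches_replicate_singleton.2 rfl, matches_replicate_univ.2 hv⟩
  | @carry a v₁ b r v₂ h =>
    simp only [length_append, length_cons, length_replicate] at hu hv
    refine ⟨.inr (.inl (⟨a.length, by omega⟩, b)), ?_, ?_⟩ <;>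
      simp only [mismatchPattern, matches_append_right, matches_cons_right,
        matches_replicate_univ, matches_replicate_singleton, Set.mem_singleton_iff]
    · exact ⟨a, _, rfl, rfl, b, _, rfl, rfl, by congr 1; omega⟩
    · exact ⟨v₁, _, rfl, h.symm, b, _, rfl, rfl, by omega⟩
  | @noCarry a v₁ b c d v₂ h =>
    simp only [length_append, length_cons] at hu hv
    refine ⟨.inr (.inr (⟨(⟨a.length, by omega⟩, ⟨c.length, by omega⟩), by dsimp only; omega⟩, b)),
      ?_, ?_⟩ <;>
      simp only [mismatchPattern, matches_append_right, matches_cons_right,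
        matches_replicate_univ, Set.mem_singleton_iff]
    · exact ⟨a, _, rfl, rfl, b, _, rfl, rfl, c, _, rfl, rfl, false, d, rfl, rfl, by omega⟩
    · exact ⟨v₁, _, rfl, h.symm, !b, v₂, rfl, rfl, by omega⟩

section Symbols

variable {Q : Type}

def cellPattern : Bool → List (Set (Sym Q))
  | false => [Set.range Sym.bit]
  | true => [Set.range Sym.state, Set.range Sym.bit]

theorem isCellContent_iff_exists_matches {x : List (Sym Q)} :
    IsCellContent x ↔ ∃ e, Matches x (cellPattern e) := by
  simp only [IsCellContent, Bool.exists_bool, cellPattern, matches_cons_right, matches_nil_right,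
    Set.mem_range]
  aesop

def factorPattern (N : ℕ) (k : MismatchIdx N) (e : Bool) : List (Set (Sym Q)) :=
  (mismatchPattern N k).1.map (Sym.bit '' ·) ++
    {Sym.colon} :: (cellPattern e ++ {Sym.semi} :: (mismatchPattern N k).2.map (Sym.bit '' ·))

theorem factorPattern_length_le (N : ℕ) (k : MismatchIdx N) (e : Bool) :
    (factorPattern (Q := Q) N k e).length ≤ 2 * N + 4 := by
  obtain ⟨h₁, h₂⟩ := mismatchPattern_length k
  cases e <;> simp only [factorPattern, cellPattern, length_append, length_map, length_cons,
    cons_append, nil_append, h₁, h₂] <;> omega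

theorem exists_matches_factorPattern_iff {N : ℕ} {m : List (Sym Q)} :
    (∃ k e, Matches m (factorPattern N k e)) ↔
      ∃ (u v : List Bool) (x : List (Sym Q)), u.length = N ∧ v.length = N ∧
        IsCellContent x ∧ bval v ≠ bval u + 1 ∧
        m = u.map Sym.bit ++ [Sym.colon] ++ x ++ [Sym.semi] ++ v.map Sym.bit := by
  simp only [factorPattern, matches_append_right, matches_cons_right, matches_map_image,
    Set.mem_singleton_iff]
  constructor
  · rintro ⟨k, e, _, _, rfl, ⟨u, hu, rfl⟩, _, _, rfl, rfl, x, _, rfl, hx, _, _, rfl, rfl, v, hv, rfl⟩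
    obtain ⟨hu, hv, h⟩ := succMismatch_of_matches_mismatchPattern k hu hv
    refine ⟨u, v, x, hu, hv, isCellContent_iff_exists_matches.2 ⟨e, hx⟩,
      h.bval_ne (hu.trans hv.symm), by simp⟩
  · rintro ⟨u, v, x, hu, hv, hx, hne, rfl⟩
    obtain ⟨k, hku, hkv⟩ := exists_matches_mismatchPattern hu hv
      (succMismatch_of_bval_ne (hu.trans hv.symm) hne)
    obtain ⟨e, hx⟩ := isCellContent_iff_exists_matches.1 hx
    exact ⟨k, e, u.map Sym.bit, Sym.colon :: (x ++ Sym.semi :: v.map Sym.bit), by simp,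
      ⟨u, hku, rfl⟩, _, _, rfl, rfl, x, _, rfl, hx, _, _, rfl, rfl, v, hkv, rfl⟩

end Symbols

/-- There is a polynomial `p` (independent of `Q` and `N`) such
that for every `N ≥ 1` there is an NFA over `Γ` with at most `p (N + |Q|)`
states accepting exactly the words containing a factor `u : x ; v` with
`u, v ∈ {0,1}^N`, `x` a cell content, and `bval v ≠ bval u + 1`. -/
theorem succ_mismatch_factor_nfa :
    ∃ p : Polynomial ℕ,
      ∀ (Q : Type) (instQ : Fintype Q) (N : ℕ), 1 ≤ N →
        ∃ (σ : Type) (instσ : Fintype σ) (M : NFA (Sym Q) σ),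
          @Fintype.card σ instσ ≤ p.eval (N + @Fintype.card Q instQ) ∧
          M.accepts = {w : List (Sym Q) |
            ∃ (α ω : List (Sym Q)) (u v : List Bool) (x : List (Sym Q)),
              u.length = N ∧ v.length = N ∧ IsCellContent x ∧
              bval v ≠ bval u + 1 ∧
              w = α ++ u.map Sym.bit ++ [Sym.colon] ++ x ++ [Sym.semi] ++
                  v.map Sym.bit ++ ω} := by
  refine ⟨10 * (Polynomial.X + 1) ^ 3, fun Q instQ N _ => ?_⟩
  have hL (k : MismatchIdx N × Bool) : (factorPattern (Q := Q) N k.1 k.2).length ≤ 2 * N + 4 :=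
    factorPattern_length_le N k.1 k.2
  refine ⟨_, inferInstance,
    factorNFA (fun k : MismatchIdx N × Bool => factorPattern N k.1 k.2) (2 * N + 4), ?_, ?_⟩
  · have := card_mismatchIdx_le N
    simp only [Fintype.card_prod, Fintype.card_bool, Fintype.card_fin, Polynomial.eval_mul,
      Polynomial.eval_pow, Polynomial.eval_add, Polynomial.eval_X, Polynomial.eval_one,
      Polynomial.eval_ofNat]
    calc Fintype.card (MismatchIdx N) * 2 * (2 * N + 4 + 1)
        ≤ (1 + 2 * N + 2 * N ^ 2) * 2 * (2 * N + 4 + 1) := by gcongr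
      _ ≤ 10 * (N + 1) ^ 3 := by nlinarith
      _ ≤ 10 * (N + Fintype.card Q + 1) ^ 3 := by gcongr; omega
  · ext w
    rw [mem_factorNFA_accepts hL]
    constructor
    · rintro ⟨⟨k, e⟩, pre, m, suf, rfl, hm⟩
      obtain ⟨u, v, x, hu, hv, hx, hne, rfl⟩ := exists_matches_factorPattern_iff.1 ⟨k, e, hm⟩
      exact ⟨pre, suf, u, v, x, hu, hv, hx, hne, by simp⟩
    · rintro ⟨pre, suf, u, v, x, hu, hv, hx, hne, rfl⟩
      obtain ⟨k, e, hm⟩ := exists_matches_factorPattern_iff.2 ⟨u, v, x, hu, hv, hx, hne, rfl⟩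
      exact ⟨(k, e), pre, _, suf, by simp, hm⟩

end Paper
end

section
/- Fix distinguished states q_0, q_f ∈ Q. There is a polynomial p (independent of Q, N, t) such that for every N ≥ 1 and every input word t ∈ {0,1}^n with n ≤ 2^N, there exists an NFA over Γ with at most p(N + n + |Q|) states whose accepted language is exactly the set of words w over Γ satisfying at least one of: (a) w is not a well-formed sequence of configurations; (b) the state symbol occurring in the first configuration of w is not q_0; (c) the first configuration of w is not initialized with t, i.e., its head is not on cell 0, or its cells 0, …, n−1 do not carry the letters of t, or some cell among n, …, 2^N−1 does not carry 0; (d) the state symbol occurring in the last configuration of w is not q_f. -/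
/-! Call a word good if it encodes a sequence of configurations whose first configuration is
initialized with `t` in state `q₀` and whose last one is in state `q_f`; the NFA must accept the
words that are not good. Goodness is the conjunction over `j < N` of acceptance by a DFA `D j`
with polynomially many states, so the NFA guesses `j` and runs the complement of `D j`.

`D j` is a product of five checkers: the syntactic shape `▷ ($ (bit^N : q? bit ;)* ↵)+ □`; bit
`j` of the addresses of each configuration, which must behave like bit `j` of a binary counter
running from `0` to `2^N - 1` (the next bit is the current one xor the carry "all later bits are
`1`", the counter never overflows, and the last address has bit `j` set); exactly one state
symbol per configuration; the cells and the head of the first configuration, read with a block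
counter capped at `|t| + 1`; the last state symbol. Only the shape checker needs a parsing
argument: the others are evaluated on words already known to be `seqWord R` for a list `R` of
block lists. The address checkers for all `j` together force the addresses of each configuration
to be `[0], …, [2^N - 1]`, which turns a word accepted by every `D j` into an encoding; the first
and last checkers are evaluated along an arbitrary decomposition of an encoding, so uniqueness of
decoding is never needed. -/

namespace Paper

/-- The `N`-bit big-endian binary representation `[i]` of `i`. -/
def binRep (N i : ℕ) : List Bool :=
  (List.range N).map (fun j => i.testBit (N - 1 - j))

/-- The block `[i] : c ;` (resp. `[i] : q c ;`) encoding cell `i` with content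
`c` when the head is not on cell `i` (resp. is on cell `i` in state `q`). -/
def cellBlock {Q : Type} (N i : ℕ) (st : Option Q) (c : Bool) : List (Sym Q) :=
  (binRep N i).map Sym.bit ++ [Sym.colon] ++
    (match st with | none => [] | some q => [Sym.state q]) ++ [Sym.bit c] ++ [Sym.semi]

/-- A configuration of the machine: cell contents, control state, head position. -/
structure TMConfig (Q : Type) where
  cells : ℕ → Bool
  state : Q
  head : ℕ

/-- The word `$ B_0 B_1 ⋯ B_{2^N−1} ↵` encoding a configuration. -/
def encodeConfig {Q : Type} (N : ℕ) (cfg : TMConfig Q) : List (Sym Q) :=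
  Sym.dollar ::
    ((List.range (2 ^ N)).map (fun i =>
      cellBlock N i (if i = cfg.head then some cfg.state else none) (cfg.cells i))).flatten
    ++ [Sym.newline]

/-- A well-formed configuration (with parameters `Q` and `N`). -/
def IsWFConfig {Q : Type} (N : ℕ) (w : List (Sym Q)) : Prop :=
  ∃ cfg : TMConfig Q, cfg.head < 2 ^ N ∧ w = encodeConfig N cfg

/-- `w` is the encoding `▷ C_1 ⋯ C_k □` of the nonempty sequence `cfgs` of
configurations (each with its head on one of the `2^N` cells). -/
def SeqVia {Q : Type} (N : ℕ) (w : List (Sym Q)) (cfgs : List (TMConfig Q)) : Prop :=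
  cfgs ≠ [] ∧ (∀ c ∈ cfgs, c.head < 2 ^ N) ∧
  w = Sym.ltri :: (cfgs.map (encodeConfig N)).flatten ++ [Sym.sq]

/-- A well-formed sequence of configurations. -/
def IsWFSeq {Q : Type} (N : ℕ) (w : List (Sym Q)) : Prop :=
  ∃ cfgs, SeqVia N w cfgs

/-- The configuration is initialized with input `t`: head on cell `0`, cells
`0, …, n−1` carrying the letters of `t` and cells `n, …, 2^N−1` carrying `0`. -/
def InitializedWith {Q : Type} (t : List Bool) (N : ℕ) (c : TMConfig Q) : Prop :=
  c.head = 0 ∧ (∀ i, i < t.length → c.cells i = t.getD i false) ∧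
  (∀ i, t.length ≤ i → i < 2 ^ N → c.cells i = false)

end Paper

namespace Nat

theorem testBit_add_one_eq_xor (p k : ℕ) :
    (p + 1).testBit k = (p.testBit k ^^ decide (∀ i < k, p.testBit i = true)) := by
  induction k generalizing p with
  | zero =>
    rcases Nat.mod_two_eq_zero_or_one p with h | h <;>
      simp [Nat.testBit_zero, h, Nat.add_mod]
  | succ k ih =>
    simp only [Nat.testBit_add_one, Nat.forall_lt_succ_left]
    rcases Nat.mod_two_eq_zero_or_one p with h | h
    · rw [show (p + 1) / 2 = p / 2 by omega]
      simp [Nat.testBit_zero, h]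
    · rw [show (p + 1) / 2 = p / 2 + 1 by omega, ih]
      simp [Nat.testBit_zero, h]

theorem forall_testBit_iff_eq_two_pow_sub_one {N p : ℕ} (hp : p < 2 ^ N) :
    (∀ i < N, p.testBit i = true) ↔ p = 2 ^ N - 1 := by
  constructor
  · intro h
    apply Nat.eq_of_testBit_eq
    intro i
    rw [Nat.testBit_two_pow_sub_one]
    by_cases hi : i < N
    · simp [h i hi, hi]
    · simpa [hi] using Nat.testBit_lt_two_pow (lt_of_lt_of_le hp (Nat.pow_le_pow_right two_pos
        (not_lt.mp hi)))
  · rintro rfl i hi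
    simp [Nat.testBit_two_pow_sub_one, hi]

end Nat

namespace List

theorem filterMap_range_ite_eq {α : Type*} (M k : ℕ) (x : α) :
    (List.range M).filterMap (fun i => if i = k then some x else none) =
      if k < M then [x] else [] := by
  induction M with
  | zero => simp
  | succ M ih =>
    rw [List.range_succ, List.filterMap_append, ih]
    rcases lt_trichotomy k M with hk | rfl | hk
    · simp [hk, show k < M + 1 by omega, show M ≠ k by omega]
    · simp
    · simp [show ¬k < M by omega, show ¬k < M + 1 by omega, show M ≠ k by omega]

theorem getD_min_length_add_one {α : Type*} (l : List α) (d : α) (m : ℕ) :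
    l.getD (min m (l.length + 1)) d = l.getD m d := by
  rcases le_or_gt m (l.length + 1) with h | h
  · rw [min_eq_left h]
  · rw [min_eq_right h.le, List.getD_eq_default _ _ (by omega),
      List.getD_eq_default _ _ (by omega)]

theorem forall_mem_zipIdx_iff {α : Type*} {l : List α} {P : ℕ → α → Prop} :
    (∀ p ∈ l.zipIdx, P p.2 p.1) ↔ ∀ i (h : i < l.length), P i l[i] := by
  simp only [Prod.forall, List.mem_zipIdx_iff_getElem?, List.getElem?_eq_some_iff]
  exact ⟨fun h i hi => h _ i ⟨hi, rfl⟩, fun h _ i ⟨hi, he⟩ => he ▸ h i hi⟩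

theorem exists_map_eq_of_forall_mem {α β : Type*} {f : β → α} {p : β → Prop} {l : List α}
    (h : ∀ x ∈ l, ∃ y, p y ∧ f y = x) : ∃ l' : List β, (∀ y ∈ l', p y) ∧ l'.map f = l := by
  induction l with
  | nil => exact ⟨[], by simp, rfl⟩
  | cons x l ih =>
    obtain ⟨y, hy, rfl⟩ := h x (by simp)
    obtain ⟨l', hl', rfl⟩ := ih fun x hx => h x (by simp [hx])
    exact ⟨y :: l', by simpa [hy] using hl', rfl⟩

end List

namespace DFA

variable {α ι σ : Type*}

def iUnionNFA (M : ι → DFA α σ) : NFA α (ι × σ) where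
  step p a := {(p.1, (M p.1).step p.2 a)}
  start := Set.range fun i => (i, (M i).start)
  accept := {p | p.2 ∈ (M p.1).accept}

theorem iUnionNFA_evalFrom_singleton (M : ι → DFA α σ) (i : ι) (s : σ) (x : List α) :
    (iUnionNFA M).evalFrom {(i, s)} x = {(i, (M i).evalFrom s x)} := by
  induction x generalizing s with
  | nil => rfl
  | cons a x ih => rw [NFA.evalFrom_cons, NFA.stepSet_singleton]; exact ih _

theorem mem_iUnionNFA_accepts (M : ι → DFA α σ) (x : List α) :
    x ∈ (iUnionNFA M).accepts ↔ ∃ i, x ∈ (M i).accepts := by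
  have hstart : (iUnionNFA M).start = ⋃ i, {(i, (M i).start)} := by
    ext; simp [iUnionNFA, eq_comm]
  rw [NFA.mem_accepts, hstart, NFA.evalFrom_iUnion]
  simp only [iUnionNFA_evalFrom_singleton, Set.mem_iUnion, Set.mem_singleton_iff]
  constructor
  · rintro ⟨_, hacc, i, rfl⟩
    exact ⟨i, hacc⟩
  · rintro ⟨i, hacc⟩
    exact ⟨_, hacc, i, rfl⟩

end DFA

namespace Paper

variable {Q : Type}

/-! ### Blocks and encodings -/

structure Block (Q : Type) where
  addr : List Bool
  state : Option Q
  content : Bool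

def Block.word (B : Block Q) : List (Sym Q) :=
  B.addr.map Sym.bit ++ Sym.colon :: (B.state.toList.map Sym.state ++ [Sym.bit B.content, Sym.semi])

def cfgWord (C : List (Block Q)) : List (Sym Q) :=
  Sym.dollar :: (C.flatMap Block.word ++ [Sym.newline])

def seqWord (R : List (List (Block Q))) : List (Sym Q) :=
  Sym.ltri :: (R.flatMap cfgWord ++ [Sym.sq])

def Block.ofCell (N : ℕ) (c : TMConfig Q) (i : ℕ) : Block Q :=
  ⟨binRep N i, if i = c.head then some c.state else none, c.cells i⟩

def blocksOf (N : ℕ) (c : TMConfig Q) : List (Block Q) :=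
  (List.range (2 ^ N)).map (Block.ofCell N c)

theorem encodeConfig_eq_cfgWord (N : ℕ) (c : TMConfig Q) :
    encodeConfig N c = cfgWord (blocksOf N c) := by
  have hblock : ∀ i, cellBlock N i (if i = c.head then some c.state else none) (c.cells i) =
      (Block.ofCell N c i).word := by
    intro i
    split_ifs <;> simp [cellBlock, Block.ofCell, Block.word, *]
  simp [encodeConfig, cfgWord, blocksOf, List.flatMap_def, hblock, Function.comp_def]

theorem seqVia_iff {N : ℕ} {w : List (Sym Q)} {cfgs : List (TMConfig Q)} :
    SeqVia N w cfgs ↔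
      cfgs ≠ [] ∧ (∀ c ∈ cfgs, c.head < 2 ^ N) ∧ w = seqWord (cfgs.map (blocksOf N)) := by
  have henc : encodeConfig N = cfgWord ∘ blocksOf (Q := Q) N :=
    funext (encodeConfig_eq_cfgWord N)
  simp [SeqVia, seqWord, List.flatMap_def, henc]

theorem length_binRep (N p : ℕ) : (binRep N p).length = N := by simp [binRep]

theorem addr_length_of_mem_blocksOf {N : ℕ} {c : TMConfig Q} {B : Block Q}
    (hB : B ∈ blocksOf N c) : B.addr.length = N := by
  obtain ⟨i, -, rfl⟩ := List.mem_map.mp hB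
  exact length_binRep N i

theorem map_addr_blocksOf (N : ℕ) (c : TMConfig Q) :
    (blocksOf N c).map Block.addr = (List.range (2 ^ N)).map (binRep N) := by
  simp [blocksOf, Block.ofCell, Function.comp_def]

theorem filterMap_state_blocksOf {N : ℕ} {c : TMConfig Q} (h : c.head < 2 ^ N) :
    (blocksOf N c).filterMap Block.state = [c.state] := by
  simp [blocksOf, Block.ofCell, List.filterMap_map, Function.comp_def,
    List.filterMap_range_ite_eq, h]

theorem exists_eq_blocksOf {N : ℕ} {C : List (Block Q)}
    (haddr : C.map Block.addr = (List.range (2 ^ N)).map (binRep N))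
    (hone : (C.filterMap Block.state).length = 1) :
    ∃ c : TMConfig Q, c.head < 2 ^ N ∧ blocksOf N c = C := by
  have hlen : C.length = 2 ^ N := by simpa using congrArg List.length haddr
  obtain ⟨q, hq⟩ := List.length_eq_one_iff.mp hone
  obtain ⟨C₁, B, C₂, hC, h₁, hB, h₂⟩ := List.filterMap_eq_cons_iff.mp hq
  have hstate : ∀ m (hm : m < C.length),
      C[m].state = if m = C₁.length then some q else none := by
    subst hC
    intro m hm
    rw [List.getElem_append]
    rcases lt_trichotomy m C₁.length with h | rfl | h
    · simpa [h, h.ne] using h₁ _ (List.getElem_mem _)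
    · simpa using hB
    · obtain ⟨k, hk⟩ : ∃ k, m - C₁.length = k + 1 := ⟨m - C₁.length - 1, by omega⟩
      simpa [show ¬m < C₁.length by omega, h.ne', hk] using
        List.filterMap_eq_nil_iff.mp h₂ _
          (List.getElem_mem (l := C₂) (n := k) (by simp at hm; omega))
  refine ⟨⟨fun i => (C[i]?.map Block.content).getD false, q, C₁.length⟩,
    by simp [hC] at hlen ⊢; omega, List.ext_getElem (by simp [blocksOf, hlen]) ?_⟩
  intro m _ hm
  have haddr_m : C[m].addr = binRep N m := by
    simpa [hm, hlen ▸ hm] using congrArg (·[m]?) haddr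
  simp only [blocksOf, List.getElem_map, List.getElem_range, Block.ofCell, ← haddr_m,
    ← hstate m hm, List.getElem?_eq_getElem hm, Option.map_some, Option.getD_some]

theorem foldl_map_bit {σ : Type*} {f : σ → Sym Q → σ} {s : σ} (h : ∀ b, f s (Sym.bit b) = s)
    (x : List Bool) : (x.map Sym.bit).foldl f s = s := by
  rw [List.foldl_map]
  exact List.foldl_fixed' h x

/-! ### The shape checker -/

inductive ShapeState (N : ℕ)
  | start
  | between (nonempty : Bool)
  | address (pos : Fin (N + 1))
  | afterColon
  | afterState
  | afterContent
  | done
  | dead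
  deriving DecidableEq, Fintype

namespace ShapeState

variable {N : ℕ}

def step : ShapeState N → Sym Q → ShapeState N
  | start, .ltri => between false
  | between _, .dollar => address 0
  | between true, .sq => done
  | address pos, .bit _ => if h : (pos : ℕ) < N then address ⟨pos + 1, by omega⟩ else dead
  | address pos, .colon => if (pos : ℕ) = N then afterColon else dead
  | address pos, .newline => if (pos : ℕ) = 0 then between true else dead
  | afterColon, .state _ => afterState
  | afterColon, .bit _ => afterContent
  | afterState, .bit _ => afterContent
  | afterContent, .semi => address 0
  | _, _ => dead

theorem foldl_dead (v : List (Sym Q)) : v.foldl step (dead : ShapeState N) = dead :=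
  List.foldl_fixed' (fun a => by cases a <;> rfl) v

theorem foldl_done_eq_done_iff {v : List (Sym Q)} :
    v.foldl step (done : ShapeState N) = done ↔ v = [] := by
  cases v with
  | nil => simp
  | cons a v => cases a <;> simp [step, foldl_dead]

theorem foldl_bits (p : Fin (N + 1)) (x : List Bool) (h : p + x.length ≤ N) :
    (x.map Sym.bit).foldl (step (Q := Q)) (address p) = address ⟨p + x.length, by omega⟩ := by
  induction x generalizing p with
  | nil => rfl
  | cons c x ih =>
    simp only [List.length_cons] at h
    simp only [List.map_cons, List.foldl_cons, step, show (p : ℕ) < N by omega, dif_pos]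
    rw [ih _ (by simp only; omega)]
    simp only [List.length_cons, Nat.add_assoc, Nat.add_comm 1]

theorem foldl_word_append {p : Fin (N + 1)} {B : Block Q} (hB : p + B.addr.length = N)
    (v : List (Sym Q)) :
    (B.word ++ v).foldl step (address p) = v.foldl step (address 0 : ShapeState N) := by
  have hbits := foldl_bits (Q := Q) p B.addr hB.le
  simp only [Block.word, List.foldl_append, hbits, List.foldl_cons]
  cases B.state <;> simp [step, hB]

theorem foldl_flatMap_word_append {C : List (Block Q)} (hC : ∀ B ∈ C, B.addr.length = N)
    (v : List (Sym Q)) :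
    (C.flatMap Block.word ++ v).foldl step (address 0) =
      v.foldl step (address (0 : Fin (N + 1))) := by
  induction C with
  | nil => rfl
  | cons B C ih =>
    rw [List.flatMap_cons, List.append_assoc, foldl_word_append (by simp [hC B (by simp)]),
      ih fun B' h => hC B' (by simp [h])]

theorem foldl_afterContent_eq_done_iff {v : List (Sym Q)} :
    v.foldl step (afterContent : ShapeState N) = done ↔
      ∃ v', v = Sym.semi :: v' ∧ v'.foldl step (address 0 : ShapeState N) = done := by
  rcases v with _ | ⟨a, v⟩
  · simp
  · cases a <;> simp [step, foldl_dead]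

theorem foldl_afterState_eq_done_iff {v : List (Sym Q)} :
    v.foldl step (afterState : ShapeState N) = done ↔
      ∃ c v', v = Sym.bit c :: v' ∧ v'.foldl step (afterContent : ShapeState N) = done := by
  rcases v with _ | ⟨a, v⟩
  · simp
  · cases a <;> simp [step, foldl_dead]

theorem foldl_afterColon_eq_done_iff {v : List (Sym Q)} :
    v.foldl step (afterColon : ShapeState N) = done ↔
      ∃ (s : Option Q) (c : Bool) (v' : List (Sym Q)),
        v = s.toList.map Sym.state ++ Sym.bit c :: Sym.semi :: v' ∧
        v'.foldl step (address 0 : ShapeState N) = done := by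
  constructor
  · intro h
    rcases v with _ | ⟨a, v⟩
    · simp at h
    cases a <;> simp [step, foldl_dead] at h
    case bit c =>
      obtain ⟨v', rfl, h'⟩ := foldl_afterContent_eq_done_iff.mp h
      exact ⟨none, c, v', rfl, h'⟩
    case state q =>
      obtain ⟨c, v', rfl, h'⟩ := foldl_afterState_eq_done_iff.mp h
      obtain ⟨v'', rfl, h''⟩ := foldl_afterContent_eq_done_iff.mp h'
      exact ⟨some q, c, v'', rfl, h''⟩
  · rintro ⟨s, c, v', rfl, h⟩
    cases s <;> simpa [step] using h

theorem foldl_address_eq_done_iff {pos : Fin (N + 1)} {v : List (Sym Q)} :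
    v.foldl step (address pos) = done ↔
      (∃ (B : Block Q) (v' : List (Sym Q)), pos + B.addr.length = N ∧ v = B.word ++ v' ∧
        v'.foldl step (address 0 : ShapeState N) = done) ∨
      ((pos : ℕ) = 0 ∧ ∃ v', v = Sym.newline :: v' ∧
        v'.foldl step (between true : ShapeState N) = done) := by
  constructor
  · intro h
    induction v generalizing pos with
    | nil => simp at h
    | cons a v ih =>
      cases a
      case bit c =>
        by_cases hp : (pos : ℕ) < N
        · simp only [List.foldl_cons, step, hp, dif_pos] at h
          rcases ih h with ⟨B, v', hlen, rfl, h'⟩ | ⟨h0, -⟩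
          · exact Or.inl ⟨⟨c :: B.addr, B.state, B.content⟩, v', by simp at hlen ⊢; omega,
              by simp [Block.word], h'⟩
          · simp at h0
        · simp [step, hp, foldl_dead] at h
      case colon =>
        by_cases hp : (pos : ℕ) = N
        · simp only [List.foldl_cons, step, hp, if_true] at h
          obtain ⟨s, c, v', rfl, h'⟩ := foldl_afterColon_eq_done_iff.mp h
          exact Or.inl ⟨⟨[], s, c⟩, v', by simp [hp], by simp [Block.word], h'⟩
        · simp [step, hp, foldl_dead] at h
      case newline =>
        by_cases hp : pos = 0
        · simp only [List.foldl_cons, step, hp] at h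
          exact Or.inr ⟨by simp [hp], v, rfl, h⟩
        · simp [step, hp, foldl_dead] at h
      all_goals simp [step, foldl_dead] at h
  · rintro (⟨B, v', hlen, rfl, h⟩ | ⟨h0, v', rfl, h⟩)
    · rwa [foldl_word_append hlen]
    · simpa [step, Fin.ext_iff, h0] using h

theorem foldl_address_zero_eq_done_iff {v : List (Sym Q)} :
    v.foldl step (address 0 : ShapeState N) = done ↔
      ∃ (C : List (Block Q)) (v' : List (Sym Q)), (∀ B ∈ C, B.addr.length = N) ∧
        v = C.flatMap Block.word ++ Sym.newline :: v' ∧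
        v'.foldl step (between true : ShapeState N) = done := by
  constructor
  · intro h
    induction hlen : v.length using Nat.strong_induction_on generalizing v with
    | _ n ih =>
      rcases foldl_address_eq_done_iff.mp h with ⟨B, v', hB, rfl, h'⟩ | ⟨-, v', rfl, h'⟩
      · obtain ⟨C, v'', hC, rfl, h''⟩ :=
          ih _ (by simp [← hlen, Block.word]; omega) h' rfl
        refine ⟨B :: C, v'', ?_, by simp, h''⟩
        simp only [Fin.val_zero, Nat.zero_add] at hB
        simpa [hB] using hC
      · exact ⟨[], v', by simp, rfl, h'⟩
  · rintro ⟨C, v', hC, rfl, h⟩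
    simpa [foldl_flatMap_word_append hC, step] using h

theorem foldl_cfgWord_append {ne : Bool} {C : List (Block Q)}
    (hC : ∀ B ∈ C, B.addr.length = N) (v : List (Sym Q)) :
    (cfgWord C ++ v).foldl step (between ne) = v.foldl step (between true : ShapeState N) := by
  simp [cfgWord, step, foldl_flatMap_word_append hC]

theorem foldl_between_eq_done_iff {ne : Bool} {v : List (Sym Q)} :
    v.foldl step (between ne : ShapeState N) = done ↔
      ∃ R : List (List (Block Q)), (ne = true ∨ R ≠ []) ∧
        (∀ C ∈ R, ∀ B ∈ C, B.addr.length = N) ∧ v = R.flatMap cfgWord ++ [Sym.sq] := by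
  constructor
  · intro h
    induction hlen : v.length using Nat.strong_induction_on generalizing v ne with
    | _ n ih =>
      rcases v with _ | ⟨a, v⟩
      · simp at h
      cases a
      case dollar =>
        obtain ⟨C, v', hC, rfl, h'⟩ := foldl_address_zero_eq_done_iff.mp h
        obtain ⟨R, -, hR, rfl⟩ := ih _ (by simp [← hlen]; omega) h' rfl
        exact ⟨C :: R, by simp, by simpa using ⟨hC, hR⟩, by simp [cfgWord]⟩
      case sq =>
        cases ne <;> simp [step, foldl_dead, foldl_done_eq_done_iff] at h
        exact ⟨[], by simp, by simp, by simp [h]⟩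
      all_goals simp [step, foldl_dead] at h
  · rintro ⟨R, hne, hR, rfl⟩
    induction R generalizing ne with
    | nil => simp_all [step]
    | cons C R ih =>
      rw [List.flatMap_cons, List.append_assoc, foldl_cfgWord_append (hR C (by simp))]
      exact ih (by simp) fun C' h => hR C' (by simp [h])

theorem foldl_start_eq_done_iff {w : List (Sym Q)} :
    w.foldl step (start : ShapeState N) = done ↔
      ∃ R : List (List (Block Q)), R ≠ [] ∧ (∀ C ∈ R, ∀ B ∈ C, B.addr.length = N) ∧
        w = seqWord R := by
  rcases w with _ | ⟨a, w⟩
  · simp [seqWord]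
  · cases a <;> simp [step, foldl_dead, foldl_between_eq_done_iff, seqWord]

end ShapeState

def shapeDFA (Q : Type) (N : ℕ) : DFA (Sym Q) (ShapeState N) :=
  ⟨ShapeState.step, .start, {.done}⟩

theorem mem_shapeDFA_accepts {N : ℕ} {w : List (Sym Q)} :
    w ∈ (shapeDFA Q N).accepts ↔
      ∃ R : List (List (Block Q)), R ≠ [] ∧ (∀ C ∈ R, ∀ B ∈ C, B.addr.length = N) ∧
        w = seqWord R :=
  ShapeState.foldl_start_eq_done_iff

/-! ### The address checkers -/

def bitAt (j : ℕ) (a : List Bool) : Bool := a.getD j false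

def carryInto (j : ℕ) (a : List Bool) : Bool := (a.drop (j + 1)).all id

theorem bitAt_append_singleton (j : ℕ) (x : List Bool) (b : Bool) :
    bitAt j (x ++ [b]) = if x.length = j then b else bitAt j x := by
  unfold bitAt
  rcases lt_trichotomy j x.length with h | rfl | h
  · rw [List.getD_append _ _ _ _ h, if_neg h.ne']
  · simp
  · rw [List.getD_append_right _ _ _ _ h.le, if_neg h.ne, List.getD_eq_default _ _ h.le,
      List.getD_eq_default _ _ (by simp; omega)]

theorem carryInto_append_singleton (j : ℕ) (x : List Bool) (b : Bool) :
    carryInto j (x ++ [b]) = if j < x.length then carryInto j x && b else carryInto j x := by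
  unfold carryInto
  rw [List.drop_append, List.all_append]
  split_ifs with h
  · simp [show j + 1 - x.length = 0 by omega]
  · simp [List.drop_eq_nil_of_le (show [b].length ≤ j + 1 - x.length by simp; omega)]

/-- `pb` and `pc` are bit `j` of the previous address and whether all of its later bits are `1`;
`false, false` stands for a virtual predecessor of `[0]`. The condition at `j = 0` forbids the
wrap-around from `[2^N - 1]` to `[0]`. -/
def CountsAt (j : ℕ) : Bool → Bool → List (List Bool) → Prop
  | pb, _, [] => pb = true
  | pb, pc, a :: as => bitAt j a = (pb ^^ pc) ∧ ¬(j = 0 ∧ pb = true ∧ pc = true) ∧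
      CountsAt j (bitAt j a) (carryInto j a) as

structure AddrScan (N : ℕ) where
  pos : Fin (N + 1)
  prevBit : Bool
  prevCarry : Bool
  bit : Bool
  carry : Bool
  deriving DecidableEq, Fintype

namespace AddrScan

variable {N : ℕ}

def init : AddrScan N := ⟨0, false, false, false, true⟩

def step (j : ℕ) : Option (AddrScan N) → Sym Q → Option (AddrScan N)
  | some s, .bit b =>
    if h : (s.pos : ℕ) < N then
      some { s with
        pos := ⟨s.pos + 1, by omega⟩
        bit := if (s.pos : ℕ) = j then b else s.bit
        carry := if j < s.pos then s.carry && b else s.carry }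
    else some s
  | some s, .colon =>
    if s.bit = (s.prevBit ^^ s.prevCarry) ∧ ¬(j = 0 ∧ s.prevBit ∧ s.prevCarry) then some s
    else none
  | some s, .semi => some ⟨0, s.bit, s.carry, false, true⟩
  | some s, .newline => if s.prevBit then some init else none
  | s, _ => s

theorem foldl_none (j : ℕ) (v : List (Sym Q)) :
    v.foldl (step j) (none : Option (AddrScan N)) = none :=
  List.foldl_fixed' (fun a => by cases a <;> rfl) v

theorem foldl_bits (j : ℕ) (pb pc : Bool) (x : List Bool) (hx : x.length ≤ N) :
    (x.map Sym.bit).foldl (step (Q := Q) j) (some ⟨0, pb, pc, false, true⟩ : Option (AddrScan N)) =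
      some ⟨⟨x.length, by omega⟩, pb, pc, bitAt j x, carryInto j x⟩ := by
  induction x using List.reverseRecOn with
  | nil => rfl
  | append_singleton x b ih =>
    simp only [List.length_append, List.length_singleton] at hx
    simp only [List.map_append, List.map_singleton, List.foldl_append, ih (by omega),
      List.foldl_cons, List.foldl_nil, step, show x.length < N by omega, dif_pos,
      bitAt_append_singleton, carryInto_append_singleton, List.length_append,
      List.length_singleton]

theorem foldl_word_append (j : ℕ) {pb pc : Bool} {B : Block Q} (hB : B.addr.length = N)
    (v : List (Sym Q)) :
    (B.word ++ v).foldl (step j) (some ⟨0, pb, pc, false, true⟩ : Option (AddrScan N)) =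
      if bitAt j B.addr = (pb ^^ pc) ∧ ¬(j = 0 ∧ pb = true ∧ pc = true) then
        v.foldl (step j) (some ⟨0, bitAt j B.addr, carryInto j B.addr, false, true⟩)
      else none := by
  simp only [Block.word, List.foldl_append, foldl_bits _ _ _ _ hB.le, List.foldl_cons]
  by_cases hok : bitAt j B.addr = (pb ^^ pc) ∧ ¬(j = 0 ∧ pb = true ∧ pc = true)
  · cases B.state <;> simp [step, hok, hB]
  · simp only [step, hok, if_false]
    cases B.state <;> simp [step, foldl_none]

open scoped Classical in
theorem foldl_flatMap_word_newline_append (j : ℕ) {pb pc : Bool} {C : List (Block Q)}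
    (hC : ∀ B ∈ C, B.addr.length = N) (v : List (Sym Q)) :
    (C.flatMap Block.word ++ Sym.newline :: v).foldl (step j)
        (some ⟨0, pb, pc, false, true⟩ : Option (AddrScan N)) =
      if CountsAt j pb pc (C.map Block.addr) then v.foldl (step j) (some init) else none := by
  induction C generalizing pb pc with
  | nil => cases pb <;> simp [step, CountsAt, foldl_none]
  | cons B C ih =>
    rw [List.flatMap_cons, List.append_assoc, foldl_word_append j (hC B (by simp)),
      ih fun B' h => hC B' (by simp [h]), List.map_cons]
    by_cases hok : bitAt j B.addr = (pb ^^ pc) ∧ ¬(j = 0 ∧ pb = true ∧ pc = true)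
    · simp [hok, CountsAt]
    · have hbad : ¬CountsAt j pb pc (B.addr :: C.map Block.addr) := by
        simp only [CountsAt]; tauto
      rw [if_neg hok, if_neg hbad]

open scoped Classical in
theorem foldl_flatMap_cfgWord_append (j : ℕ) {R : List (List (Block Q))}
    (hR : ∀ C ∈ R, ∀ B ∈ C, B.addr.length = N) (v : List (Sym Q)) :
    (R.flatMap cfgWord ++ v).foldl (step j) (some init : Option (AddrScan N)) =
      if ∀ C ∈ R, CountsAt j false false (C.map Block.addr) then v.foldl (step j) (some init)
      else none := by
  induction R with
  | nil => simp
  | cons C R ih =>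
    have hcfg : (cfgWord C ++ (R.flatMap cfgWord ++ v)).foldl (step j) (some init) =
        if CountsAt j false false (C.map Block.addr) then
          (R.flatMap cfgWord ++ v).foldl (step j) (some (init : AddrScan N))
        else none := by
      simp only [cfgWord, List.cons_append, List.foldl_cons, List.append_assoc, step]
      exact foldl_flatMap_word_newline_append j (hR C (by simp)) _
    rw [List.flatMap_cons, List.append_assoc, hcfg, ih fun C' h => hR C' (by simp [h])]
    by_cases hok : CountsAt j false false (C.map Block.addr) <;> simp [hok]

end AddrScan

def addrDFA (Q : Type) (N j : ℕ) : DFA (Sym Q) (Option (AddrScan N)) :=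
  ⟨AddrScan.step j, some AddrScan.init, {s | s.isSome}⟩

theorem seqWord_mem_addrDFA_accepts {N j : ℕ} {R : List (List (Block Q))}
    (hR : ∀ C ∈ R, ∀ B ∈ C, B.addr.length = N) :
    seqWord R ∈ (addrDFA Q N j).accepts ↔ ∀ C ∈ R, CountsAt j false false (C.map Block.addr) := by
  have h := AddrScan.foldl_flatMap_cfgWord_append (N := N) j hR [Sym.sq]
  change ((R.flatMap cfgWord ++ [Sym.sq]).foldl (AddrScan.step j) (some AddrScan.init)).isSome
    = true ↔ _
  rw [h]
  split_ifs with hok <;> simpa [AddrScan.step] using hok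

theorem bitAt_binRep {N j : ℕ} (p : ℕ) (hj : j < N) :
    bitAt j (binRep N p) = p.testBit (N - 1 - j) := by
  simp [bitAt, binRep, List.getD_eq_getElem?_getD, hj]

theorem carryInto_binRep {N j : ℕ} (p : ℕ) (hj : j < N) :
    carryInto j (binRep N p) = decide (∀ i < N - 1 - j, p.testBit i = true) := by
  rw [carryInto, Bool.eq_iff_iff, List.all_eq_true, decide_eq_true_iff,
    List.forall_mem_iff_forall_getElem]
  simp only [List.length_drop, length_binRep]
  simp only [List.getElem_drop, binRep, List.getElem_map, List.getElem_range, id]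
  constructor
  · intro h i hi
    simpa [show N - 1 - (j + 1 + (N - 2 - j - i)) = i by omega] using h (N - 2 - j - i) (by omega)
  · intro h m hm
    exact h _ (by omega)

theorem bitAt_binRep_add_one {N j : ℕ} (p : ℕ) (hj : j < N) :
    bitAt j (binRep N (p + 1)) = (bitAt j (binRep N p) ^^ carryInto j (binRep N p)) := by
  rw [bitAt_binRep _ hj, bitAt_binRep _ hj, carryInto_binRep _ hj, Nat.testBit_add_one_eq_xor]

theorem bitAt_binRep_zero {N j : ℕ} (hj : j < N) : bitAt j (binRep N 0) = false := by
  rw [bitAt_binRep _ hj, Nat.zero_testBit]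

theorem forall_bitAt_binRep_iff {N p : ℕ} (hp : p < 2 ^ N) :
    (∀ j < N, bitAt j (binRep N p) = true) ↔ p = 2 ^ N - 1 := by
  rw [← Nat.forall_testBit_iff_eq_two_pow_sub_one hp]
  constructor
  · intro h i hi
    simpa [bitAt_binRep _ (show N - 1 - i < N by omega), show N - 1 - (N - 1 - i) = i by omega]
      using h (N - 1 - i) (by omega)
  · intro h j hj
    rw [bitAt_binRep _ hj]
    exact h _ (by omega)

theorem bitAt_zero_and_carryInto_zero_binRep_iff {N p : ℕ} (hN : 0 < N) (hp : p < 2 ^ N) :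
    (bitAt 0 (binRep N p) = true ∧ carryInto 0 (binRep N p) = true) ↔ p = 2 ^ N - 1 := by
  obtain ⟨M, rfl⟩ : ∃ M, N = M + 1 := ⟨N - 1, by omega⟩
  rw [bitAt_binRep _ hN, carryInto_binRep _ hN, ← Nat.forall_testBit_iff_eq_two_pow_sub_one hp,
    Nat.forall_lt_succ_right]
  simp [and_comm]

theorem eq_of_bitAt_eq {N : ℕ} {a b : List Bool} (ha : a.length = N) (hb : b.length = N)
    (h : ∀ j < N, bitAt j a = bitAt j b) : a = b := by
  refine List.ext_getElem (ha.trans hb.symm) fun j hja hjb => ?_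
  have := h j (by omega)
  rwa [bitAt, bitAt, List.getD_eq_getElem _ _ hja, List.getD_eq_getElem _ _ hjb] at this

theorem forall_countsAt_binRep_iff {N p : ℕ} (hN : 0 < N) (hp : p < 2 ^ N)
    {as : List (List Bool)} (has : ∀ a ∈ as, a.length = N) :
    (∀ j < N, CountsAt j (bitAt j (binRep N p)) (carryInto j (binRep N p)) as) ↔
      as = (List.range' (p + 1) (2 ^ N - 1 - p)).map (binRep N) := by
  induction as generalizing p with
  | nil =>
    simp only [CountsAt, forall_bitAt_binRep_iff hp, List.nil_eq, List.map_eq_nil_iff,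
      List.range'_eq_nil_iff]
    omega
  | cons a as ih =>
    have has' : ∀ a ∈ as, a.length = N := fun a h => has a (List.mem_cons_of_mem _ h)
    simp only [CountsAt]
    constructor
    · intro h
      have hlast : p ≠ 2 ^ N - 1 := fun he =>
        (h 0 hN).2.1 ⟨rfl, (bitAt_zero_and_carryInto_zero_binRep_iff hN hp).mpr he⟩
      have ha : a = binRep N (p + 1) :=
        eq_of_bitAt_eq (has a (by simp)) (length_binRep _ _) fun j hj => by
          rw [(h j hj).1, bitAt_binRep_add_one _ hj]
      subst ha
      rw [(ih (by omega) has').mp fun j hj => (h j hj).2.2,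
        show 2 ^ N - 1 - p = 2 ^ N - 1 - (p + 1) + 1 by omega, List.range'_succ]
      rfl
    · intro h
      have hk : 2 ^ N - 1 - p = 2 ^ N - 1 - (p + 1) + 1 := by
        by_contra hk
        rw [show 2 ^ N - 1 - p = 0 by omega] at h
        simp at h
      rw [hk, List.range'_succ, List.map_cons, List.cons.injEq] at h
      obtain ⟨rfl, rfl⟩ := h
      intro j hj
      refine ⟨bitAt_binRep_add_one _ hj, ?_, (ih (by omega) has').mpr rfl j hj⟩
      rintro ⟨rfl, h⟩
      have := (bitAt_zero_and_carryInto_zero_binRep_iff hN hp).mp h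
      omega

theorem forall_countsAt_iff {N : ℕ} (hN : 0 < N) {as : List (List Bool)}
    (has : ∀ a ∈ as, a.length = N) :
    (∀ j < N, CountsAt j false false as) ↔ as = (List.range (2 ^ N)).map (binRep N) := by
  have hpos : 0 < 2 ^ N := Nat.two_pow_pos N
  rw [List.range_eq_range', show 2 ^ N = 2 ^ N - 1 - 0 + 1 by omega, List.range'_succ,
    List.map_cons]
  cases as with
  | nil => simpa [CountsAt] using ⟨0, hN⟩
  | cons a as =>
    have has' : ∀ a ∈ as, a.length = N := fun a h => has a (List.mem_cons_of_mem _ h)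
    have hrest := forall_countsAt_binRep_iff hN hpos has'
    simp only [CountsAt, Bool.false_xor, Bool.false_eq_true, and_false, not_false_eq_true,
      true_and, List.cons.injEq]
    constructor
    · intro h
      have ha : a = binRep N 0 :=
        eq_of_bitAt_eq (has a (by simp)) (length_binRep _ _) fun j hj => by
          rw [(h j hj).1, bitAt_binRep_zero hj]
      subst ha
      exact ⟨rfl, hrest.mp fun j hj => (h j hj).2⟩
    · rintro ⟨rfl, rfl⟩ j hj
      exact ⟨bitAt_binRep_zero hj, hrest.mpr rfl j hj⟩

/-! ### The state-symbol checkers -/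

def Sym.state? : Sym Q → Option Q
  | .state q => some q
  | _ => none

theorem filterMap_state?_word (B : Block Q) : B.word.filterMap Sym.state? = B.state.toList := by
  cases h : B.state <;>
    simp [Block.word, h, List.filterMap_map, Function.comp_def, Sym.state?, List.filterMap_cons]

theorem filterMap_state?_cfgWord (C : List (Block Q)) :
    (cfgWord C).filterMap Sym.state? = C.filterMap Block.state := by
  simp [cfgWord, Sym.state?, List.filterMap_cons, List.filterMap_flatMap, filterMap_state?_word,
    List.filterMap_eq_flatMap_toList Block.state]

theorem filterMap_state?_seqWord (R : List (List (Block Q))) :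
    (seqWord R).filterMap Sym.state? = R.flatMap (List.filterMap Block.state) := by
  simp [seqWord, Sym.state?, List.filterMap_cons, List.filterMap_flatMap, filterMap_state?_cfgWord]

def oneStateStep : Option Bool → Sym Q → Option Bool
  | some false, .state _ => some true
  | some true, .state _ => none
  | some true, .newline => some false
  | some false, .newline => none
  | s, _ => s

theorem foldl_none_oneStateStep (v : List (Sym Q)) : v.foldl oneStateStep none = none :=
  List.foldl_fixed' (fun a => by cases a <;> rfl) v

def afterStates : ℕ → Option Bool
  | 0 => some false
  | 1 => some true
  | _ + 2 => none

theorem oneStateStep_afterStates_state (n : ℕ) (q : Q) :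
    oneStateStep (afterStates n) (Sym.state q) = afterStates (n + 1) := by
  rcases n with _ | _ | n <;> rfl

theorem foldl_oneStateStep_flatMap_word (C : List (Block Q)) (n : ℕ) (v : List (Sym Q)) :
    (C.flatMap Block.word ++ v).foldl oneStateStep (afterStates n) =
      v.foldl oneStateStep (afterStates (n + (C.filterMap Block.state).length)) := by
  induction C generalizing n with
  | nil => rfl
  | cons B C ih =>
    have hbits :
        (B.addr.map (Sym.bit (Q := Q))).foldl oneStateStep (afterStates n) = afterStates n :=
      foldl_map_bit (fun _ => by rcases n with _ | _ | n <;> rfl) _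
    have hnoop : ∀ a : Sym Q, a ≠ Sym.newline → (∀ q, a ≠ Sym.state q) →
        ∀ m, oneStateStep (afterStates m) a = afterStates m := by
      intro a ha hq m
      rcases m with _ | _ | m <;> cases a <;> simp_all [oneStateStep, afterStates]
    have hword : B.word.foldl oneStateStep (afterStates n) =
        afterStates (n + B.state.toList.length) := by
      cases hB : B.state <;>
        simp [Block.word, hB, hbits, hnoop, oneStateStep_afterStates_state]
    rw [List.flatMap_cons, List.append_assoc, List.foldl_append, hword, ih]
    cases hB : B.state <;> simp [hB, Nat.add_assoc, Nat.add_comm 1]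

theorem foldl_oneStateStep_cfgWord (C : List (Block Q)) (v : List (Sym Q)) :
    (cfgWord C ++ v).foldl oneStateStep (some false) =
      if (C.filterMap Block.state).length = 1 then v.foldl oneStateStep (some false) else none := by
  have h := foldl_oneStateStep_flatMap_word C 0 (Sym.newline :: v)
  rw [Nat.zero_add] at h
  rw [cfgWord, List.cons_append, List.foldl_cons, List.append_assoc, List.singleton_append,
    show oneStateStep (some false) Sym.dollar = some false from rfl,
    show some false = afterStates 0 from rfl, h, List.foldl_cons]
  generalize (C.filterMap Block.state).length = n
  rcases n with _ | _ | n <;> simp [afterStates, oneStateStep, foldl_none_oneStateStep]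

theorem foldl_oneStateStep_flatMap_cfgWord (R : List (List (Block Q))) (v : List (Sym Q)) :
    (R.flatMap cfgWord ++ v).foldl oneStateStep (some false) =
      if ∀ C ∈ R, (C.filterMap Block.state).length = 1 then v.foldl oneStateStep (some false)
      else none := by
  induction R with
  | nil => simp
  | cons C R ih =>
    rw [List.flatMap_cons, List.append_assoc, foldl_oneStateStep_cfgWord, ih]
    by_cases hC : (C.filterMap Block.state).length = 1 <;> simp [hC]

def oneStateDFA (Q : Type) : DFA (Sym Q) (Option Bool) :=
  ⟨oneStateStep, some false, {some false}⟩

theorem seqWord_mem_oneStateDFA_accepts (R : List (List (Block Q))) :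
    seqWord R ∈ (oneStateDFA Q).accepts ↔ ∀ C ∈ R, (C.filterMap Block.state).length = 1 := by
  change (R.flatMap cfgWord ++ [Sym.sq]).foldl oneStateStep (some false) = some false ↔ _
  rw [foldl_oneStateStep_flatMap_cfgWord]
  split_ifs with h
  · exact iff_of_true rfl h
  · exact iff_of_false (by simp) h

def lastStateStep (s : Option Q) (a : Sym Q) : Option Q := a.state?.or s

theorem foldl_lastStateStep (w : List (Sym Q)) (s : Option Q) :
    w.foldl lastStateStep s = (w.filterMap Sym.state?).getLast?.or s := by
  induction w using List.reverseRecOn with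
  | nil => simp
  | append_singleton w a ih =>
    rw [List.foldl_append, ih, List.filterMap_append, List.getLast?_append]
    cases a <;> simp [lastStateStep, Sym.state?]

def lastStateDFA (qf : Q) : DFA (Sym Q) (Option Q) :=
  ⟨lastStateStep, none, {some qf}⟩

theorem mem_lastStateDFA_accepts {qf : Q} {w : List (Sym Q)} :
    w ∈ (lastStateDFA qf).accepts ↔ (w.filterMap Sym.state?).getLast? = some qf := by
  change w.foldl lastStateStep none = some qf ↔ _
  rw [foldl_lastStateStep, Option.or_none]

theorem seqWord_blocksOf_mem_lastStateDFA_iff {qf : Q} {N : ℕ} {cfgs : List (TMConfig Q)}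
    (hheads : ∀ c ∈ cfgs, c.head < 2 ^ N) :
    seqWord (cfgs.map (blocksOf N)) ∈ (lastStateDFA qf).accepts ↔
      cfgs.getLast?.map TMConfig.state = some qf := by
  rw [mem_lastStateDFA_accepts, filterMap_state?_seqWord, List.flatMap_map,
    List.flatMap_congr fun c hc => filterMap_state_blocksOf (hheads c hc), ← List.map_eq_flatMap,
    List.getLast?_map]

/-! ### The first-configuration checker -/

def CellOK (q0 : Q) (t : List Bool) (i : ℕ) (B : Block Q) : Prop :=
  (∀ q, B.state = some q → i = 0 ∧ q = q0) ∧ B.content = t.getD i false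

/-- `count` is the number of blocks of the current configuration read so far, capped at `n + 1`;
the cap loses nothing, since every cell from `n` on must hold `0` and only `count = 0` matters for
the head. -/
inductive FirstScan (n : ℕ)
  | reading (count : Fin (n + 2)) (afterColon : Bool)
  | passed
  | failed
  deriving DecidableEq, Fintype

namespace FirstScan

open scoped Classical in
noncomputable def step (q0 : Q) (t : List Bool) : FirstScan t.length → Sym Q → FirstScan t.length
  | reading k _, .colon => reading k true
  | reading k true, .bit b => if b = t.getD k false then reading k true else failed
  | reading k _, .state q => if (k : ℕ) = 0 ∧ q = q0 then reading k true else failed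
  | reading k _, .semi => reading ⟨min (k + 1) (t.length + 1), by omega⟩ false
  | reading _ _, .newline => passed
  | s, _ => s

variable {q0 : Q} {t : List Bool}

def cappedCount (t : List Bool) (m : ℕ) : FirstScan t.length :=
  reading ⟨min m (t.length + 1), by omega⟩ false

theorem foldl_failed (v : List (Sym Q)) : v.foldl (step q0 t) failed = failed :=
  List.foldl_fixed' (fun a => by cases a <;> rfl) v

theorem foldl_passed (v : List (Sym Q)) : v.foldl (step q0 t) passed = passed :=
  List.foldl_fixed' (fun a => by cases a <;> rfl) v

theorem step_colon (k : Fin (t.length + 2)) (b : Bool) :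
    step q0 t (reading k b) Sym.colon = reading k true := rfl

theorem step_content (k : Fin (t.length + 2)) (c : Bool) :
    step q0 t (reading k true) (Sym.bit c) =
      if c = t.getD k false then reading k true else failed := rfl

open scoped Classical in
theorem step_state (k : Fin (t.length + 2)) (b : Bool) (q : Q) :
    step q0 t (reading k b) (Sym.state q) =
      if (k : ℕ) = 0 ∧ q = q0 then reading k true else failed := rfl

theorem step_semi (k : Fin (t.length + 2)) (b : Bool) :
    step q0 t (reading k b) Sym.semi =
      reading ⟨min (k + 1) (t.length + 1), by omega⟩ false := rfl

open scoped Classical in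
theorem foldl_word_append (m : ℕ) (B : Block Q) (v : List (Sym Q)) :
    (B.word ++ v).foldl (step q0 t) (cappedCount t m) =
      if CellOK q0 t m B then v.foldl (step q0 t) (cappedCount t (m + 1)) else failed := by
  set k : Fin (t.length + 2) := ⟨min m (t.length + 1), by omega⟩ with hk
  have hbits := foldl_map_bit (f := step q0 t) (s := reading k false) (fun _ => rfl) B.addr
  have hsemi : step q0 t (reading k true) Sym.semi = cappedCount t (m + 1) := by
    simp only [step_semi, cappedCount, reading.injEq, and_true, Fin.ext_iff, hk]
    omega
  have hcontent : step q0 t (reading k true) (Sym.bit B.content) =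
      if B.content = t.getD m false then reading k true else failed := by
    rw [step_content, hk, List.getD_min_length_add_one]
  have hstate : ∀ q, step q0 t (reading k true) (Sym.state q) =
      if m = 0 ∧ q = q0 then reading k true else failed := by
    intro q
    have hk0 : (k : ℕ) = 0 ↔ m = 0 := by simp only [hk]; omega
    simp only [step_state, hk0]
  rw [show cappedCount t m = reading k false from rfl]
  simp only [Block.word, List.foldl_append, hbits, List.foldl_cons, step_colon]
  cases hs : B.state with
  | none =>
    simp only [Option.toList, List.map_nil, List.foldl_nil, hcontent]
    by_cases hc : B.content = t.getD m false
    · rw [if_pos hc, hsemi, if_pos ⟨by simp [hs], hc⟩]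
    · rw [if_neg hc, if_neg fun h => hc h.2]
      exact foldl_failed _
  | some q =>
    simp only [Option.toList, List.map_cons, List.map_nil, List.foldl_cons, List.foldl_nil,
      hstate]
    by_cases hq : m = 0 ∧ q = q0
    · rw [if_pos hq, hcontent]
      by_cases hc : B.content = t.getD m false
      · rw [if_pos hc, hsemi, if_pos ⟨fun q' hq' => by simp_all, hc⟩]
      · rw [if_neg hc, if_neg fun h => hc h.2]
        exact foldl_failed _
    · rw [if_neg hq, if_neg fun h => hq (h.1 q hs)]
      exact foldl_failed _

open scoped Classical in
theorem foldl_flatMap_word_newline_append (m : ℕ) (C : List (Block Q)) (v : List (Sym Q)) :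
    (C.flatMap Block.word ++ Sym.newline :: v).foldl (step q0 t) (cappedCount t m) =
      if ∀ p ∈ C.zipIdx m, CellOK q0 t p.2 p.1 then passed else failed := by
  induction C generalizing m with
  | nil =>
    rw [if_pos (by simp)]
    exact foldl_passed v
  | cons B C ih =>
    rw [List.flatMap_cons, List.append_assoc, foldl_word_append]
    simp only [List.zipIdx_cons, List.forall_mem_cons]
    by_cases hB : CellOK q0 t m B
    · simp only [hB, if_true, ih, true_and]
    · simp only [hB, if_false, false_and]

end FirstScan

noncomputable def firstDFA (q0 : Q) (t : List Bool) : DFA (Sym Q) (FirstScan t.length) :=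
  ⟨FirstScan.step q0 t, FirstScan.cappedCount t 0, {.passed}⟩

theorem seqWord_cons_mem_firstDFA_accepts {q0 : Q} {t : List Bool} (C : List (Block Q))
    (R : List (List (Block Q))) :
    seqWord (C :: R) ∈ (firstDFA q0 t).accepts ↔ ∀ p ∈ C.zipIdx, CellOK q0 t p.2 p.1 := by
  have hword : seqWord (C :: R) = Sym.ltri :: Sym.dollar :: (C.flatMap Block.word ++
      Sym.newline :: (R.flatMap cfgWord ++ [Sym.sq])) := by
    simp [seqWord, cfgWord]
  rw [hword]
  change List.foldl (FirstScan.step q0 t) (FirstScan.cappedCount t 0) (C.flatMap Block.word ++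
      Sym.newline :: (R.flatMap cfgWord ++ [Sym.sq])) = .passed ↔ _
  rw [FirstScan.foldl_flatMap_word_newline_append]
  split_ifs with h
  · exact iff_of_true rfl h
  · exact iff_of_false (by simp) h

theorem forall_cellOK_blocksOf_iff {q0 : Q} {t : List Bool} {N : ℕ} {c : TMConfig Q}
    (hc : c.head < 2 ^ N) (ht : t.length ≤ 2 ^ N) :
    (∀ p ∈ (blocksOf N c).zipIdx, CellOK q0 t p.2 p.1) ↔
      c.state = q0 ∧ InitializedWith t N c := by
  rw [List.forall_mem_zipIdx_iff (P := CellOK q0 t)]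
  simp only [blocksOf, List.length_map, List.length_range, List.getElem_map, List.getElem_range,
    Block.ofCell, CellOK]
  constructor
  · intro h
    obtain ⟨hhead, hstate⟩ := (h c.head hc).1 c.state (if_pos rfl)
    refine ⟨hstate, hhead, fun i hi => (h i (by omega)).2, fun i hi hi' => ?_⟩
    rw [(h i hi').2, List.getD_eq_default _ _ hi]
  · rintro ⟨hstate, hhead, hcells, hzero⟩ i hi
    refine ⟨fun q hq => ?_, ?_⟩
    · split_ifs at hq with hi
      · cases hq
        exact ⟨hi.trans hhead, hstate⟩
    · rcases lt_or_ge i t.length with hit | hit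
      · exact hcells i hit
      · rw [hzero i hit hi, List.getD_eq_default _ _ hit]

/-! ### The product checkers -/

theorem isWFSeq_of_mem_accepts {N : ℕ} (hN : 0 < N) {w : List (Sym Q)}
    (hshape : w ∈ (shapeDFA Q N).accepts) (haddr : ∀ j < N, w ∈ (addrDFA Q N j).accepts)
    (hone : w ∈ (oneStateDFA Q).accepts) : IsWFSeq N w := by
  obtain ⟨R, hne, hR, rfl⟩ := mem_shapeDFA_accepts.mp hshape
  have hcfg : ∀ C ∈ R, ∃ c : TMConfig Q, c.head < 2 ^ N ∧ blocksOf N c = C := fun C hC =>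
    exists_eq_blocksOf
      ((forall_countsAt_iff hN (by simpa using hR C hC)).mp fun j hj =>
        (seqWord_mem_addrDFA_accepts hR).mp (haddr j hj) C hC)
      ((seqWord_mem_oneStateDFA_accepts R).mp hone C hC)
  obtain ⟨cfgs, hheads, rfl⟩ := List.exists_map_eq_of_forall_mem hcfg
  exact ⟨cfgs, seqVia_iff.mpr ⟨by simpa using hne, hheads, rfl⟩⟩

theorem mem_accepts_of_seqVia {N j : ℕ} (hN : 0 < N) (hj : j < N) {w : List (Sym Q)}
    {cfgs : List (TMConfig Q)} (hvia : SeqVia N w cfgs) :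
    w ∈ (shapeDFA Q N).accepts ∧ w ∈ (addrDFA Q N j).accepts ∧ w ∈ (oneStateDFA Q).accepts := by
  obtain ⟨hne, hheads, rfl⟩ := seqVia_iff.mp hvia
  have hR : ∀ C ∈ cfgs.map (blocksOf N), ∀ B ∈ C, B.addr.length = N := by
    simp only [List.mem_map]
    rintro _ ⟨c, -, rfl⟩ B hB
    exact addr_length_of_mem_blocksOf hB
  refine ⟨mem_shapeDFA_accepts.mpr ⟨_, by simpa using hne, hR, rfl⟩,
    (seqWord_mem_addrDFA_accepts hR).mpr ?_, (seqWord_mem_oneStateDFA_accepts _).mpr ?_⟩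
  · simp only [List.mem_map]
    rintro _ ⟨c, -, rfl⟩
    rw [map_addr_blocksOf]
    exact (forall_countsAt_iff hN (by simp [length_binRep])).mpr rfl j hj
  · simp only [List.mem_map]
    rintro _ ⟨c, hc, rfl⟩
    rw [filterMap_state_blocksOf (hheads c hc)]
    rfl

theorem mem_firstDFA_iff_of_seqVia {q0 : Q} {t : List Bool} {N : ℕ} (ht : t.length ≤ 2 ^ N)
    {w : List (Sym Q)} {cfgs : List (TMConfig Q)} (hvia : SeqVia N w cfgs) :
    w ∈ (firstDFA q0 t).accepts ↔
      ∀ c, cfgs.head? = some c → c.state = q0 ∧ InitializedWith t N c := by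
  obtain ⟨hne, hheads, rfl⟩ := seqVia_iff.mp hvia
  obtain ⟨c, cfgs, rfl⟩ := List.exists_cons_of_ne_nil hne
  rw [List.map_cons, seqWord_cons_mem_firstDFA_accepts,
    forall_cellOK_blocksOf_iff (hheads c (by simp)) ht]
  simp

theorem mem_lastStateDFA_iff_of_seqVia {qf : Q} {N : ℕ} {w : List (Sym Q)}
    {cfgs : List (TMConfig Q)} (hvia : SeqVia N w cfgs) :
    w ∈ (lastStateDFA qf).accepts ↔ ∀ c, cfgs.getLast? = some c → c.state = qf := by
  obtain ⟨hne, hheads, rfl⟩ := seqVia_iff.mp hvia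
  rw [seqWord_blocksOf_mem_lastStateDFA_iff hheads]
  obtain ⟨c, hc⟩ := Option.isSome_iff_exists.mp (List.getLast?_isSome.mpr hne)
  simp [hc]

noncomputable def checkerDFA (q0 qf : Q) (t : List Bool) (N j : ℕ) :
    DFA (Sym Q)
      (ShapeState N × Option (AddrScan N) × Option Bool × FirstScan t.length × Option Q) :=
  (shapeDFA Q N).inter <| (addrDFA Q N j).inter <| (oneStateDFA Q).inter <|
    (firstDFA q0 t).inter (lastStateDFA qf)

theorem forall_mem_checkerDFA_accepts_iff {q0 qf : Q} {t : List Bool} {N : ℕ} (hN : 0 < N)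
    (ht : t.length ≤ 2 ^ N) (w : List (Sym Q)) :
    (∀ j < N, w ∈ (checkerDFA q0 qf t N j).accepts) ↔
      IsWFSeq N w ∧
      (∀ cfgs c, SeqVia N w cfgs → cfgs.head? = some c → c.state = q0) ∧
      (∀ cfgs c, SeqVia N w cfgs → cfgs.head? = some c → InitializedWith t N c) ∧
      (∀ cfgs c, SeqVia N w cfgs → cfgs.getLast? = some c → c.state = qf) := by
  simp only [checkerDFA, DFA.accepts_inter, Language.mem_inf]
  constructor
  · intro h
    obtain ⟨hshape, -, hone, hfirst, hlast⟩ := h 0 hN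
    refine ⟨isWFSeq_of_mem_accepts hN hshape (fun j hj => (h j hj).2.1) hone,
      fun cfgs c hvia hc => ((mem_firstDFA_iff_of_seqVia ht hvia).mp hfirst c hc).1,
      fun cfgs c hvia hc => ((mem_firstDFA_iff_of_seqVia ht hvia).mp hfirst c hc).2,
      fun cfgs c hvia hc => (mem_lastStateDFA_iff_of_seqVia hvia).mp hlast c hc⟩
  · rintro ⟨⟨cfgs, hvia⟩, hq0, hinit, hqf⟩ j hj
    obtain ⟨hshape, haddr, hone⟩ := mem_accepts_of_seqVia hN hj hvia
    exact ⟨hshape, haddr, hone,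
      (mem_firstDFA_iff_of_seqVia ht hvia).mpr fun c hc =>
        ⟨hq0 cfgs c hvia hc, hinit cfgs c hvia hc⟩,
      (mem_lastStateDFA_iff_of_seqVia hvia).mpr fun c hc => hqf cfgs c hvia hc⟩

theorem card_shapeState_le (N : ℕ) : Fintype.card (ShapeState N) ≤ 9 * (N + 1) := by
  let f : ShapeState N → Fin 9 × Fin (N + 1)
    | .start => (0, 0)
    | .between b => (if b then 1 else 2, 0)
    | .address pos => (3, pos)
    | .afterColon => (4, 0)
    | .afterState => (5, 0)
    | .afterContent => (6, 0)
    | .done => (7, 0)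
    | .dead => (8, 0)
  have hf : Function.Injective f := by
    intro a b h
    cases a <;> cases b <;> simp_all [f] <;> split_ifs at h <;> simp_all
  simpa [mul_comm] using Fintype.card_le_of_injective f hf

theorem card_addrScan_le (N : ℕ) : Fintype.card (AddrScan N) ≤ 16 * (N + 1) := by
  have hf : Function.Injective fun s : AddrScan N =>
      (s.pos, s.prevBit, s.prevCarry, s.bit, s.carry) := by
    rintro ⟨⟩ ⟨⟩ h
    simp_all
  simpa [mul_comm, mul_assoc] using Fintype.card_le_of_injective _ hf

theorem card_firstScan_le (n : ℕ) : Fintype.card (FirstScan n) ≤ 2 * n + 6 := by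
  let f : FirstScan n → Option (Option (Fin (n + 2) × Bool))
    | .reading k b => some (some (k, b))
    | .passed => some none
    | .failed => none
  have hf : Function.Injective f := by
    intro a b h
    cases a <;> cases b <;> simp_all [f]
  have := Fintype.card_le_of_injective f hf
  simp only [Fintype.card_option, Fintype.card_prod, Fintype.card_fin, Fintype.card_bool] at this
  omega

theorem card_checker_states_le [Fintype Q] (N n : ℕ) :
    Fintype.card (Fin N × ShapeState N × Option (AddrScan N) × Option Bool × FirstScan n ×
      Option Q) ≤ 2754 * (N + n + Fintype.card Q + 1) ^ 5 := by
  have hS := card_shapeState_le N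
  have hA := card_addrScan_le N
  have hF := card_firstScan_le n
  simp only [Fintype.card_prod, Fintype.card_fin, Fintype.card_option, Fintype.card_bool]
  set m := N + n + Fintype.card Q + 1
  calc _ ≤ m * (9 * m * (17 * m * (3 * (6 * m * m)))) := by gcongr <;> omega
    _ = 2754 * m ^ 5 := by ring

/-- There is a polynomial `p` (independent of `Q`, `N`, `t`)
such that for all `N ≥ 1` and input `t` with `|t| ≤ 2^N` there is an NFA over
`Γ` with at most `p (N + |t| + |Q|)` states accepting exactly the words that
are not a well-formed sequence of configurations, or whose first configuration
is not in state `q₀`, or whose first configuration is not initialized with `t`,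
or whose last configuration is not in state `q_f`. -/
theorem not_seq_cfg_nfa :
    ∃ p : Polynomial ℕ,
      ∀ (Q : Type) (instQ : Fintype Q) (q0 qf : Q) (N : ℕ), 1 ≤ N →
        ∀ t : List Bool, t.length ≤ 2 ^ N →
          ∃ (σ : Type) (instσ : Fintype σ) (M : NFA (Sym Q) σ),
            @Fintype.card σ instσ ≤ p.eval (N + t.length + @Fintype.card Q instQ) ∧
            M.accepts = {w : List (Sym Q) |
              (¬ IsWFSeq N w) ∨
              (∃ (cfgs : List (TMConfig Q)) (c : TMConfig Q),
                  SeqVia N w cfgs ∧ cfgs.head? = some c ∧ c.state ≠ q0) ∨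
              (∃ (cfgs : List (TMConfig Q)) (c : TMConfig Q),
                  SeqVia N w cfgs ∧ cfgs.head? = some c ∧ ¬ InitializedWith t N c) ∨
              (∃ (cfgs : List (TMConfig Q)) (c : TMConfig Q),
                  SeqVia N w cfgs ∧ cfgs.getLast? = some c ∧ c.state ≠ qf)} := by
  refine ⟨.C 2754 * (.X + 1) ^ 5, fun Q _ q0 qf N hN t ht =>
    ⟨_, inferInstance, DFA.iUnionNFA fun j : Fin N => (checkerDFA q0 qf t N j)ᶜ, ?_, ?_⟩⟩
  · simpa using card_checker_states_le (Q := Q) N t.length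
  · ext w
    have hbad := (forall_mem_checkerDFA_accepts_iff (q0 := q0) (qf := qf) hN ht w).not
    simp only [not_and_or, not_forall, exists_prop] at hbad
    simp only [DFA.mem_iUnionNFA_accepts, Fin.exists_iff, exists_prop]
    exact hbad

end Paper
end

section
/- Every trace of Lib with k = l + 2 threads that is not linearizable w.r.t. S_N contains, for each i ∈ {1, …, l}, exactly one call event to the method M_i, and this call is matched by a return event (i.e., for each i the trace has exactly one completed M_i method event and no open M_i calls). -/
namespace Paper

/-- The shared-variable domain `D = {Begin, Run, End}`. -/
inductive DVal where
  | Begin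
  | Run
  | End
  deriving DecidableEq

/-- Method names of the library `Lib`: `Sum.inl (Sum.inl γ)` is `M_γ` (γ ∈ Γ),
`Sum.inl (Sum.inr i)` is `M_i` (1 ≤ i ≤ l), and `Sum.inr ()` is `M_Tick`. -/
abbrev MName (Γ : Type) (l : ℕ) := (Γ ⊕ Fin l) ⊕ Unit

/-- The method `M_Tick`. -/
def tickName {Γ : Type} {l : ℕ} : MName Γ l := Sum.inr ()

/-- The method `M_γ`. -/
def gammaName {Γ : Type} {l : ℕ} (γ : Γ) : MName Γ l := Sum.inl (Sum.inl γ)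

/-- The method `M_i`. -/
def insName {Γ : Type} {l : ℕ} (i : Fin l) : MName Γ l := Sum.inl (Sum.inr i)

/-- The final state (program counter) of each method. -/
def finalPC {Γ : Type} {l : ℕ} : MName Γ l → ℕ
  | Sum.inl (Sum.inl _) => 1
  | Sum.inl (Sum.inr _) => 2
  | Sum.inr _ => 2

/-- Internal (read/write) transitions of the methods: `M_γ` reads `Run`;
`M_i` reads `Begin` then reads `End`; `M_Tick` writes `Run` then writes
`End`.  `mTrans m pc d d' pc'` means that method `m` can step from program
counter `pc` with shared value `d` to program counter `pc'` with shared value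
`d'`. -/
def mTrans {Γ : Type} {l : ℕ} (m : MName Γ l) (pc : ℕ) (d d' : DVal)
    (pc' : ℕ) : Prop :=
  match m with
  | Sum.inl (Sum.inl _) =>
      pc = 0 ∧ pc' = 1 ∧ d = DVal.Run ∧ d' = d
  | Sum.inl (Sum.inr _) =>
      (pc = 0 ∧ pc' = 1 ∧ d = DVal.Begin ∧ d' = d) ∨
      (pc = 1 ∧ pc' = 2 ∧ d = DVal.End ∧ d' = d)
  | Sum.inr _ =>
      (pc = 0 ∧ pc' = 1 ∧ d' = DVal.Run) ∨
      (pc = 1 ∧ pc' = 2 ∧ d' = DVal.End)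

/-- Observable labels: calls (with thread and method) and returns (with
thread). -/
inductive Label (Γ : Type) (l k : ℕ) where
  | call (t : Fin k) (m : MName Γ l)
  | ret (t : Fin k)

/-- A configuration of `Lib^k`: the shared value together with, for each
thread, `none` (idle) or the method it is running and its program counter. -/
abbrev LCfg (Γ : Type) (l k : ℕ) := DVal × (Fin k → Option (MName Γ l × ℕ))

/-- `Steps c tr c'` holds iff there is an execution from `c` to `c'` whose
trace (sequence of call/return labels) is `tr`; read/write steps are
unlabelled. -/
inductive Steps {Γ : Type} {l k : ℕ} :
    LCfg Γ l k → List (Label Γ l k) → LCfg Γ l k → Prop where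
  | nil (c : LCfg Γ l k) : Steps c [] c
  | call {d : DVal} {μ : Fin k → Option (MName Γ l × ℕ)} (t : Fin k)
      (m : MName Γ l) {tr : List (Label Γ l k)} {c' : LCfg Γ l k}
      (h : μ t = none)
      (hs : Steps (d, Function.update μ t (some (m, 0))) tr c') :
      Steps (d, μ) (Label.call t m :: tr) c'
  | ret {d : DVal} {μ : Fin k → Option (MName Γ l × ℕ)} (t : Fin k)
      (m : MName Γ l) {tr : List (Label Γ l k)} {c' : LCfg Γ l k}
      (h : μ t = some (m, finalPC m))
      (hs : Steps (d, Function.update μ t none) tr c') :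
      Steps (d, μ) (Label.ret t :: tr) c'
  | internal {d : DVal} {μ : Fin k → Option (MName Γ l × ℕ)} (d' : DVal)
      (t : Fin k) (m : MName Γ l) (pc pc' : ℕ) {tr : List (Label Γ l k)}
      {c' : LCfg Γ l k}
      (h : μ t = some (m, pc)) (ht : mTrans m pc d d' pc')
      (hs : Steps (d', Function.update μ t (some (m, pc'))) tr c') :
      Steps (d, μ) tr c'

/-- `tr` is a trace of `Lib` with `k` threads: the trace of some execution
from the initial configuration (shared value `Begin`, all threads idle). -/
def IsTrace {Γ : Type} {l k : ℕ} (tr : List (Label Γ l k)) : Prop :=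
  ∃ c' : LCfg Γ l k, Steps (DVal.Begin, fun _ => none) tr c'

/-- The thread performing a label. -/
def threadOf {Γ : Type} {l k : ℕ} : Label Γ l k → Fin k
  | Label.call t _ => t
  | Label.ret t => t

/-- Position `a` of `h` carries an open call: a call event with no matching
later return (no later event of the same thread). -/
def IsOpenCall {Γ : Type} {l k : ℕ} (h : List (Label Γ l k)) (a : ℕ) : Prop :=
  ∃ (t : Fin k) (m : MName Γ l), h[a]? = some (Label.call t m) ∧
    ∀ (b : ℕ) (lb : Label Γ l k), a < b → h[b]? = some lb → threadOf lb ≠ t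

/-- A complete trace: no open calls. -/
def CompleteTrace {Γ : Type} {l k : ℕ} (h : List (Label Γ l k)) : Prop :=
  ∀ a : ℕ, ¬ IsOpenCall h a

/-- A method event: positions of a matching call/return pair, together with
its thread and the name of the called method. -/
structure MEvent (Γ : Type) (l k : ℕ) where
  callPos : ℕ
  retPos : ℕ
  thread : Fin k
  name : MName Γ l

/-- `e` is a method event of the trace `h`: its call and return positions
match (same thread, no event of that thread in between). -/
def IsMEvent {Γ : Type} {l k : ℕ} (h : List (Label Γ l k))
    (e : MEvent Γ l k) : Prop :=
  e.callPos < e.retPos ∧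
  h[e.callPos]? = some (Label.call e.thread e.name) ∧
  h[e.retPos]? = some (Label.ret e.thread) ∧
  ∀ (c : ℕ) (lb : Label Γ l k), e.callPos < c → c < e.retPos →
    h[c]? = some lb → threadOf lb ≠ e.thread

/-- The happens-before relation: `e` returns before `e'` is called. -/
def HB {Γ : Type} {l k : ℕ} (e e' : MEvent Γ l k) : Prop :=
  e.retPos < e'.callPos

/-- A complete trace `h` is linearizable w.r.t. a specification `S`: there is
a total order (a list without repetition) of all its method events extending
happens-before whose label sequence is in `S`. -/
def LinearizableComplete {Γ : Type} {l k : ℕ} (h : List (Label Γ l k))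
    (S : Set (List (MName Γ l))) : Prop :=
  ∃ es : List (MEvent Γ l k), es.Nodup ∧
    (∀ e : MEvent Γ l k, IsMEvent h e ↔ e ∈ es) ∧
    es.Pairwise (fun e e' => ¬ HB e' e) ∧
    es.map MEvent.name ∈ S

/-- Remove from `h` the letters at the positions in `S`. -/
def deletePositions {α : Type} (h : List α) (S : Finset ℕ) : List α :=
  (List.range h.length).filterMap (fun a => if a ∈ S then none else h[a]?)

/-- `h'` is a completion of `h`: it is obtained by deleting some open calls of
`h` and appending return events at the end, and it is complete. -/
def CompletionOf {Γ : Type} {l k : ℕ} (h h' : List (Label Γ l k)) : Prop :=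
  ∃ (S : Finset ℕ) (tail : List (Label Γ l k)),
    (∀ a ∈ S, IsOpenCall h a) ∧
    (∀ lb ∈ tail, ∃ t : Fin k, lb = Label.ret t) ∧
    h' = deletePositions h S ++ tail ∧
    CompleteTrace h'

/-- A trace is linearizable w.r.t. `S` if some completion of it is. -/
def Linearizable {Γ : Type} {l k : ℕ} (h : List (Label Γ l k))
    (S : Set (List (MName Γ l))) : Prop :=
  ∃ h' : List (Label Γ l k), CompletionOf h h' ∧ LinearizableComplete h' S

/-- The specification `S_N`: words containing zero or at least two `M_Tick`,
or zero or at least two `M_i` for some `i`, or whose projection onto the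
letters `M_i`, `M_γ` is (up to the renaming `γ ↦ M_γ`, `a_i ↦ M_i`) in the
language of the NFA `Nfa`. -/
def SpecN {Γ : Type} [DecidableEq Γ] {l : ℕ} {σ : Type}
    (Nfa : NFA (Γ ⊕ Fin l) σ) : Set (List (MName Γ l)) :=
  {ws | ws.count tickName ≠ 1 ∨
        (∃ i : Fin l, ws.count (insName i) ≠ 1) ∨
        (∃ x ∈ Nfa.accepts, ws.filterMap Sum.getLeft? = x)}

/-- `u` (over `Γ ∪ A`) is an insertion of the letters `A = {a_1, …, a_l}`
(the elements of `Fin l`) into `w ∈ Γ*`: each letter of `A` is inserted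
exactly once, in any order, anywhere in `w`. -/
def IsInsertion {Γ : Type} {l : ℕ} (w : List Γ) (u : List (Γ ⊕ Fin l)) : Prop :=
  ∃ (ws : Fin (l + 1) → List Γ) (p : Equiv.Perm (Fin l)),
    w = (List.ofFn ws).flatten ∧
    u = (ws 0).map Sum.inl ++
        (List.ofFn fun i : Fin l => Sum.inr (p i) :: (ws i.succ).map Sum.inl).flatten

/-!
In every trace, the next event of a thread after one of its calls is a return. Hence deleting
open calls of a trace and appending returns for the remaining ones yields a complete trace in
which every call is matched, and listing its method events by call position linearizes it, with
label sequence the sequence of called methods. If the trace is not linearizable w.r.t. `S_N`,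
every such completion therefore calls `M_i` exactly once. Deleting all open calls shows that
exactly one call to `M_i` is matched; an open call to `M_i` could instead be kept and returned
at the end, giving a completion with two calls to `M_i`.
-/

section ThreadEvents

variable {Γ : Type} {l k : ℕ}

inductive Alternates (t : Fin k) : Bool → List (Label Γ l k) → Prop
  | nil (busy : Bool) : Alternates t busy []
  | other {busy : Bool} {lb : Label Γ l k} {h : List (Label Γ l k)}
      (hlb : threadOf lb ≠ t) (hh : Alternates t busy h) : Alternates t busy (lb :: h)
  | call {m : MName Γ l} {h : List (Label Γ l k)}
      (hh : Alternates t true h) : Alternates t false (Label.call t m :: h)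
  | ret {h : List (Label Γ l k)}
      (hh : Alternates t false h) : Alternates t true (Label.ret t :: h)

theorem Steps.alternates {c c' : LCfg Γ l k} {tr : List (Label Γ l k)}
    (hs : Steps c tr c') (t : Fin k) : Alternates t (c.2 t).isSome tr := by
  induction hs with
  | nil => exact .nil _
  | call t' m hμ _ ih =>
    by_cases ht : t' = t
    · subst ht
      simpa [hμ] using Alternates.call (m := m) (by simpa using ih)
    · exact .other ht (by simpa [Function.update_of_ne (Ne.symm ht)] using ih)
  | ret t' m hμ _ ih =>
    by_cases ht : t' = t
    · subst ht
      simpa [hμ] using Alternates.ret (by simpa using ih)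
    · exact .other ht (by simpa [Function.update_of_ne (Ne.symm ht)] using ih)
  | internal d' t' m pc pc' hμ _ _ ih =>
    by_cases ht : t' = t
    · subst ht
      simpa [hμ] using ih
    · simpa [Function.update_of_ne (Ne.symm ht)] using ih

theorem Alternates.of_cons {t : Fin k} {busy : Bool} {lb : Label Γ l k} {h : List (Label Γ l k)}
    (hh : Alternates t busy (lb :: h)) : ∃ busy', Alternates t busy' h := by
  cases hh <;> exact ⟨_, by assumption⟩

theorem Alternates.drop_of_call {t : Fin k} {busy : Bool} {h : List (Label Γ l k)} {a : ℕ}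
    {m : MName Γ l} (hh : Alternates t busy h) (ha : h[a]? = some (Label.call t m)) :
    Alternates t true (h.drop (a + 1)) := by
  induction h generalizing a busy with
  | nil => simp at ha
  | cons lb h ih =>
    cases a with
    | zero =>
      obtain rfl : lb = Label.call t m := by simpa using ha
      cases hh with
      | other hlb => exact absurd rfl hlb
      | call hh => exact hh
    | succ a =>
      obtain ⟨_, hh⟩ := hh.of_cons
      exact ih hh (by simpa using ha)

theorem Alternates.eq_ret_of_first {t : Fin k} {h : List (Label Γ l k)} {b : ℕ}
    {lb : Label Γ l k} (hh : Alternates t true h) (hb : h[b]? = some lb) (hlb : threadOf lb = t)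
    (hfirst : ∀ c < b, ∀ lb', h[c]? = some lb' → threadOf lb' ≠ t) : lb = Label.ret t := by
  generalize hbusy : true = busy at hh
  induction hh generalizing b with
  | nil => simp at hb
  | call => simp at hbusy
  | other hne _ ih =>
    cases b with
    | zero =>
      obtain rfl : _ = lb := by simpa using hb
      exact absurd hlb hne
    | succ b =>
      refine ih (by simpa using hb) (fun c hc lb' hc' => ?_) hbusy
      exact hfirst (c + 1) (by omega) lb' (by simpa using hc')
  | ret _ =>
    cases b with
    | zero => simpa using hb.symm
    | succ b => exact absurd rfl (hfirst 0 (by omega) _ rfl)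

def NoEventBetween (h : List (Label Γ l k)) (t : Fin k) (a b : ℕ) : Prop :=
  ∀ (c : ℕ) (lb : Label Γ l k), a < c → c < b → h[c]? = some lb → threadOf lb ≠ t

def ReturnsFollowCalls (h : List (Label Γ l k)) : Prop :=
  ∀ (a b : ℕ) (t : Fin k) (m : MName Γ l) (lb : Label Γ l k),
    h[a]? = some (Label.call t m) → a < b → h[b]? = some lb → threadOf lb = t →
    NoEventBetween h t a b → lb = Label.ret t

theorem IsTrace.returnsFollowCalls {tr : List (Label Γ l k)} (htr : IsTrace tr) :
    ReturnsFollowCalls tr := by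
  obtain ⟨_, hs⟩ := htr
  intro a b t m lb ha hab hb hlb hbetween
  refine ((hs.alternates t).drop_of_call ha).eq_ret_of_first (b := b - (a + 1)) ?_ hlb ?_
  · rw [List.getElem?_drop, show a + 1 + (b - (a + 1)) = b by omega, hb]
  · intro c hc lb' hc'
    rw [List.getElem?_drop] at hc'
    exact hbetween _ lb' (by omega) (by omega) hc'

end ThreadEvents

section Positions

variable {α : Type}

theorem filterMap_getElem?_eq_pmap (h : List α) {L : List ℕ} (hL : ∀ a ∈ L, a < h.length) :
    L.filterMap (h[·]?) = L.pmap (fun a ha => h[a]) hL := by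
  induction L with
  | nil => rfl
  | cons a L ih =>
    simp only [List.filterMap_cons, List.pmap_cons, getElem?_pos h a (hL a (by simp)),
      ih fun b hb => hL b (by simp [hb])]

theorem filterMap_getElem?_range (h : List α) : (List.range h.length).filterMap (h[·]?) = h := by
  rw [filterMap_getElem?_eq_pmap h fun a => List.mem_range.1]
  apply List.ext_getElem <;> simp

def keptPositions (h : List α) (S : Finset ℕ) : List ℕ :=
  (List.range h.length).filter (· ∉ S)

theorem mem_keptPositions {h : List α} {S : Finset ℕ} {a : ℕ} :
    a ∈ keptPositions h S ↔ a < h.length ∧ a ∉ S := by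
  simp [keptPositions]

theorem sortedLT_keptPositions (h : List α) (S : Finset ℕ) : (keptPositions h S).SortedLT :=
  (List.pairwise_lt_range.filter _).sortedLT

theorem deletePositions_eq_pmap (h : List α) (S : Finset ℕ) :
    deletePositions h S = (keptPositions h S).pmap (fun a ha => h[a])
      fun _ ha => (mem_keptPositions.1 ha).1 := by
  rw [← filterMap_getElem?_eq_pmap, keptPositions, List.filterMap_filter, deletePositions]
  congr 1
  funext a
  by_cases ha : a ∈ S <;> simp [ha]

theorem length_deletePositions (h : List α) (S : Finset ℕ) :
    (deletePositions h S).length = (keptPositions h S).length := by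
  rw [deletePositions_eq_pmap, List.length_pmap]

theorem getElem?_deletePositions {h : List α} {S : Finset ℕ} {j : ℕ}
    (hj : j < (keptPositions h S).length) :
    (deletePositions h S)[j]? = h[(keptPositions h S)[j]]? := by
  have hlt := (mem_keptPositions.1 (List.getElem_mem hj)).1
  simp [deletePositions_eq_pmap, hj, hlt]

theorem deletePositions_empty (h : List α) : deletePositions h ∅ = h := by
  simpa [deletePositions] using filterMap_getElem?_range h

end Positions

section Events

variable {Γ : Type} {l k : ℕ}

theorem IsMEvent.eq_of_callPos_eq {h : List (Label Γ l k)} {e e' : MEvent Γ l k}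
    (he : IsMEvent h e) (he' : IsMEvent h e') (hpos : e.callPos = e'.callPos) : e = e' := by
  obtain ⟨hlt, hcall, hret, hbetween⟩ := he
  obtain ⟨hlt', hcall', hret', hbetween'⟩ := he'
  rw [hpos, hcall'] at hcall
  obtain ⟨hthread, hname⟩ : e'.thread = e.thread ∧ e'.name = e.name := by simpa using hcall
  have hret_pos : e.retPos = e'.retPos := by
    by_contra hne
    rcases Nat.lt_or_gt_of_ne hne with hlt'' | hlt''
    · exact hbetween' _ _ (hpos ▸ hlt) hlt'' hret (by simp [threadOf, hthread])
    · exact hbetween _ _ (hpos ▸ hlt') hlt'' hret' (by simp [threadOf, hthread])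
  cases e; cases e'
  simp_all

theorem ReturnsFollowCalls.exists_isMEvent {h : List (Label Γ l k)} (hP : ReturnsFollowCalls h)
    {a : ℕ} {t : Fin k} {m : MName Γ l} (ha : h[a]? = some (Label.call t m))
    (hopen : ¬ IsOpenCall h a) : ∃ b, IsMEvent h ⟨a, b, t, m⟩ := by
  classical
  have hnext : ∃ b, a < b ∧ ∃ lb, h[b]? = some lb ∧ threadOf lb = t := by
    by_contra! hnone
    exact hopen ⟨t, m, ha, fun b lb hab hb => hnone b hab lb hb⟩
  obtain ⟨hab, lb, hb, hlb⟩ := Nat.find_spec hnext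
  have hbetween : NoEventBetween h t a (Nat.find hnext) := fun c lb' hac hcb hc hlb' =>
    Nat.find_min hnext hcb ⟨hac, lb', hc, hlb'⟩
  refine ⟨Nat.find hnext, hab, ha, ?_, hbetween⟩
  rw [hb, hP a _ t m lb ha hab hb hlb hbetween]

open Classical in
noncomputable def eventAt (h : List (Label Γ l k)) (a : ℕ) : Option (MEvent Γ l k) :=
  if he : ∃ e, IsMEvent h e ∧ e.callPos = a then some he.choose else none

theorem eventAt_eq_some_iff {h : List (Label Γ l k)} {a : ℕ} {e : MEvent Γ l k} :
    eventAt h a = some e ↔ IsMEvent h e ∧ e.callPos = a := by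
  unfold eventAt
  split_ifs with hex
  · obtain ⟨hchoose, hpos⟩ := hex.choose_spec
    refine ⟨fun he => Option.some_inj.1 he ▸ ⟨hchoose, hpos⟩, fun ⟨he, hpos'⟩ => ?_⟩
    rw [hchoose.eq_of_callPos_eq he (hpos.trans hpos'.symm)]
  · simpa using fun he => hex ⟨e, he⟩

noncomputable def events (h : List (Label Γ l k)) : List (MEvent Γ l k) :=
  (List.range h.length).filterMap (eventAt h)

theorem mem_events {h : List (Label Γ l k)} {e : MEvent Γ l k} :
    e ∈ events h ↔ IsMEvent h e := by
  simp only [events, List.mem_filterMap, List.mem_range, eventAt_eq_some_iff]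
  refine ⟨fun ⟨_, _, he, _⟩ => he, fun he => ⟨e.callPos, ?_, he, rfl⟩⟩
  exact (List.getElem?_eq_some_iff.1 he.2.1).1

theorem nodup_events (h : List (Label Γ l k)) : (events h).Nodup :=
  List.nodup_range.filterMap fun _ _ _ he he' =>
    (eventAt_eq_some_iff.1 he).2.symm.trans (eventAt_eq_some_iff.1 he').2

theorem pairwise_not_hb_events (h : List (Label Γ l k)) :
    (events h).Pairwise (fun e e' => ¬ HB e' e) := by
  refine List.pairwise_filterMap.2 (List.pairwise_lt_range.imp ?_)
  intro a b hab e he e' he' hhb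
  obtain ⟨⟨hlt', -⟩, rfl⟩ := eventAt_eq_some_iff.1 he'
  obtain ⟨-, rfl⟩ := eventAt_eq_some_iff.1 he
  exact absurd hhb (by unfold HB; omega)

def Label.callee? : Label Γ l k → Option (MName Γ l)
  | .call _ m => some m
  | .ret _ => none

theorem map_name_events {h : List (Label Γ l k)} (hP : ReturnsFollowCalls h)
    (hc : CompleteTrace h) : (events h).map MEvent.name = h.filterMap Label.callee? := by
  conv_rhs => rw [← filterMap_getElem?_range h, List.filterMap_filterMap]
  rw [events, List.map_filterMap]
  congr 1
  funext a
  rcases he : eventAt h a with _ | e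
  · rcases ha : h[a]? with _ | ⟨t, m⟩ | t
    · rfl
    · obtain ⟨b, hb⟩ := hP.exists_isMEvent ha (hc a)
      simp [eventAt_eq_some_iff.2 ⟨hb, rfl⟩] at he
    · rfl
  · obtain ⟨⟨-, hcall, -⟩, rfl⟩ := eventAt_eq_some_iff.1 he
    simp [hcall, Label.callee?]

theorem linearizableComplete_of_callees_mem {h : List (Label Γ l k)}
    {S : Set (List (MName Γ l))} (hP : ReturnsFollowCalls h) (hc : CompleteTrace h)
    (hS : h.filterMap Label.callee? ∈ S) : LinearizableComplete h S :=
  ⟨events h, nodup_events h, fun _ => mem_events.symm, pairwise_not_hb_events h,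
    map_name_events hP hc ▸ hS⟩

end Events

section Completion

variable {Γ : Type} {l k : ℕ}

open Classical in
noncomputable def openCalls (h : List (Label Γ l k)) : Finset ℕ :=
  {a ∈ Finset.range h.length | IsOpenCall h a}

theorem mem_openCalls {h : List (Label Γ l k)} {a : ℕ} :
    a ∈ openCalls h ↔ IsOpenCall h a := by
  classical
  simp only [openCalls, Finset.mem_filter, Finset.mem_range, and_iff_right_iff_imp]
  rintro ⟨_, _, hcall, -⟩
  exact (List.getElem?_eq_some_iff.1 hcall).1

theorem getElem?_append_of_call {h tail : List (Label Γ l k)}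
    (htail : ∀ lb ∈ tail, ∃ t, lb = Label.ret t) {a : ℕ} {t : Fin k} {m : MName Γ l}
    (ha : (h ++ tail)[a]? = some (Label.call t m)) :
    a < h.length ∧ h[a]? = some (Label.call t m) := by
  by_cases haL : a < h.length
  · exact ⟨haL, by rwa [List.getElem?_append_left haL] at ha⟩
  · rw [List.getElem?_append_right (by omega)] at ha
    obtain ⟨_, hret⟩ := htail _ (List.mem_of_getElem? ha)
    cases hret

theorem ReturnsFollowCalls.append_rets {h tail : List (Label Γ l k)} (hP : ReturnsFollowCalls h)
    (htail : ∀ lb ∈ tail, ∃ t, lb = Label.ret t) : ReturnsFollowCalls (h ++ tail) := by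
  intro a b t m lb ha hab hb hlb hbetween
  obtain ⟨-, ha⟩ := getElem?_append_of_call htail ha
  by_cases hbL : b < h.length
  · rw [List.getElem?_append_left hbL] at hb
    refine hP a b t m lb ha hab hb hlb fun c lb' hac hcb hc => hbetween c lb' hac hcb ?_
    rwa [List.getElem?_append_left (by omega)]
  · rw [List.getElem?_append_right (by omega)] at hb
    obtain ⟨t', rfl⟩ := htail _ (List.mem_of_getElem? hb)
    rw [← hlb]
    rfl

theorem ReturnsFollowCalls.deletePositions {h : List (Label Γ l k)} {S : Finset ℕ}
    (hP : ReturnsFollowCalls h) (hS : ∀ a ∈ S, IsOpenCall h a) :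
    ReturnsFollowCalls (deletePositions h S) := by
  have hsorted := sortedLT_keptPositions h S
  intro j j' t m lb hj hjj' hj' hlb hbetween
  have hjK : j < (keptPositions h S).length :=
    length_deletePositions h S ▸ (List.getElem?_eq_some_iff.1 hj).1
  have hj'K : j' < (keptPositions h S).length :=
    length_deletePositions h S ▸ (List.getElem?_eq_some_iff.1 hj').1
  rw [getElem?_deletePositions hjK] at hj
  rw [getElem?_deletePositions hj'K] at hj'
  refine hP _ _ t m lb hj (hsorted.getElem_lt_getElem_iff.2 hjj') hj' hlb ?_
  intro c lb' hac hcb hc hlb'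
  by_cases hcS : c ∈ S
  · -- a deleted call of thread `t` is open, yet thread `t` acts again later
    obtain ⟨t', m', hc', hlater⟩ := hS c hcS
    rw [hc] at hc'
    cases hc'
    exact hlater _ lb hcb hj' (hlb.trans hlb'.symm)
  · obtain ⟨i, hiK, rfl⟩ := List.getElem_of_mem
      (mem_keptPositions.2 ⟨(List.getElem?_eq_some_iff.1 hc).1, hcS⟩)
    exact hbetween i lb' (hsorted.getElem_lt_getElem_iff.1 hac)
      (hsorted.getElem_lt_getElem_iff.1 hcb) (by rwa [getElem?_deletePositions hiK]) hlb'

theorem completeTrace_deletePositions_append {h tail : List (Label Γ l k)} {S : Finset ℕ}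
    (hP : ReturnsFollowCalls h) (hS : ∀ a ∈ S, IsOpenCall h a)
    (htail : ∀ lb ∈ tail, ∃ t, lb = Label.ret t)
    (hclosed : ∀ a t m, h[a]? = some (Label.call t m) → IsOpenCall h a → a ∉ S →
      Label.ret t ∈ tail) :
    CompleteTrace (deletePositions h S ++ tail) := by
  have hsorted := sortedLT_keptPositions h S
  rintro j ⟨t, m, hj, hlater⟩
  obtain ⟨hjL, hj⟩ := getElem?_append_of_call htail hj
  have hjK : j < (keptPositions h S).length := length_deletePositions h S ▸ hjL
  rw [getElem?_deletePositions hjK] at hj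
  by_cases hopen : IsOpenCall h (keptPositions h S)[j]
  · obtain ⟨r, hr, hret⟩ := List.getElem_of_mem
      (hclosed _ t m hj hopen (mem_keptPositions.1 (List.getElem_mem hjK)).2)
    refine hlater ((deletePositions h S).length + r) (Label.ret t) (by omega) ?_ rfl
    rw [List.getElem?_append_right (by omega), Nat.add_sub_cancel_left, List.getElem?_eq_getElem hr,
      hret]
  · obtain ⟨b, hjb, -, hb, -⟩ := hP.exists_isMEvent hj hopen
    have hbS : b ∉ S := fun hbS => by
      obtain ⟨_, _, hb', _⟩ := hS b hbS
      rw [hb] at hb'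
      cases hb'
    obtain ⟨j', hj'K, rfl⟩ := List.getElem_of_mem
      (mem_keptPositions.2 ⟨(List.getElem?_eq_some_iff.1 hb).1, hbS⟩)
    refine hlater j' (Label.ret t) (hsorted.getElem_lt_getElem_iff.1 hjb) ?_ rfl
    rwa [List.getElem?_append_left (length_deletePositions h S ▸ hj'K),
      getElem?_deletePositions hj'K]

theorem callees_deletePositions_not_mem {h tail : List (Label Γ l k)} {S : Finset ℕ}
    {Spec : Set (List (MName Γ l))} (hP : ReturnsFollowCalls h) (hnl : ¬ Linearizable h Spec)
    (hS : ∀ a ∈ S, IsOpenCall h a) (htail : ∀ lb ∈ tail, ∃ t, lb = Label.ret t)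
    (hclosed : ∀ a t m, h[a]? = some (Label.call t m) → IsOpenCall h a → a ∉ S →
      Label.ret t ∈ tail) :
    (deletePositions h S).filterMap Label.callee? ∉ Spec := by
  intro hmem
  have hcomplete := completeTrace_deletePositions_append hP hS htail hclosed
  have htail_callees : tail.filterMap Label.callee? = [] := List.filterMap_eq_nil_iff.2
    fun lb hlb => by obtain ⟨t, rfl⟩ := htail lb hlb; rfl
  refine hnl ⟨_, ⟨S, tail, hS, htail, rfl, hcomplete⟩, ?_⟩
  refine linearizableComplete_of_callees_mem ((hP.deletePositions hS).append_rets htail)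
    hcomplete ?_
  rwa [List.filterMap_append, htail_callees, List.append_nil]

end Completion

section Counting

-- `List.count` in `SpecN` uses the derived `BEq` of `Sum`, which the library does not show lawful.
instance {α β : Type*} [BEq α] [BEq β] [LawfulBEq α] [LawfulBEq β] :
    LawfulBEq (α ⊕ β) where
  rfl {x} := match x with
    | .inl a => beq_self_eq_true a
    | .inr b => beq_self_eq_true b
  eq_of_beq {x y} h := by
    cases x <;> cases y <;> first | cases h | exact congrArg _ (eq_of_beq h)

open scoped Finset

variable {Γ : Type} [DecidableEq Γ] {l k : ℕ}

def callPositions (h : List (Label Γ l k)) (x : MName Γ l) : Finset ℕ :=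
  {a ∈ Finset.range h.length | h[a]?.bind Label.callee? = some x}

theorem count_callees_deletePositions (h : List (Label Γ l k)) (S : Finset ℕ) (x : MName Γ l) :
    ((deletePositions h S).filterMap Label.callee?).count x = #(callPositions h x \ S) := by
  rw [deletePositions, List.filterMap_filterMap, List.count_filterMap]
  trans Nat.count (fun a => a ∉ S ∧ h[a]?.bind Label.callee? = some x) h.length
  · refine List.countP_congr fun a _ => ?_
    by_cases ha : a ∈ S <;> simp [ha]
  · rw [Nat.count_eq_card_filter_range, callPositions, Finset.sdiff_eq_filter,
      Finset.filter_filter]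
    simp only [and_comm]

theorem countP_eq_card_callPositions {h : List (Label Γ l k)} {x : MName Γ l}
    {p : Label Γ l k → Bool} (hcall : ∀ t m, p (Label.call t m) = decide (m = x))
    (hret : ∀ t, p (Label.ret t) = false) : h.countP p = #(callPositions h x) := by
  conv_rhs => rw [← Finset.sdiff_empty (s := callPositions h x),
    ← count_callees_deletePositions, deletePositions_empty, List.count_filterMap]
  refine List.countP_congr fun lb _ => ?_
  cases lb <;> simp [Label.callee?, hcall, hret]

theorem card_callPositions_sdiff_eq_one {σ : Type} {Nfa : NFA (Γ ⊕ Fin l) σ}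
    {h tail : List (Label Γ l k)} {S : Finset ℕ} (hP : ReturnsFollowCalls h)
    (hnl : ¬ Linearizable h (SpecN Nfa)) (i : Fin l) (hS : S ⊆ openCalls h)
    (htail : ∀ lb ∈ tail, ∃ t, lb = Label.ret t)
    (hclosed : ∀ a t m, h[a]? = some (Label.call t m) → IsOpenCall h a → a ∉ S →
      Label.ret t ∈ tail) :
    #(callPositions h (insName i) \ S) = 1 := by
  by_contra hne
  refine callees_deletePositions_not_mem hP hnl (fun a ha => mem_openCalls.1 (hS ha)) htail hclosed
    (Or.inr (Or.inl ⟨i, ?_⟩))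
  rwa [count_callees_deletePositions]

theorem card_callPositions_sdiff_openCalls {σ : Type} {Nfa : NFA (Γ ⊕ Fin l) σ}
    {h : List (Label Γ l k)} (hP : ReturnsFollowCalls h) (hnl : ¬ Linearizable h (SpecN Nfa))
    (i : Fin l) : #(callPositions h (insName i) \ openCalls h) = 1 :=
  card_callPositions_sdiff_eq_one hP hnl i subset_rfl (tail := []) (by simp)
    fun a _ _ _ hopen hnot => absurd (mem_openCalls.2 hopen) hnot

theorem disjoint_callPositions_openCalls {σ : Type} {Nfa : NFA (Γ ⊕ Fin l) σ}
    {h : List (Label Γ l k)} (hP : ReturnsFollowCalls h) (hnl : ¬ Linearizable h (SpecN Nfa))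
    (i : Fin l) : Disjoint (callPositions h (insName i)) (openCalls h) := by
  refine Finset.disjoint_left.2 fun a hcall hopen => ?_
  obtain ⟨t, m, ha, -⟩ := mem_openCalls.1 hopen
  have htwo := card_callPositions_sdiff_eq_one hP hnl i (Finset.erase_subset a _)
    (tail := [Label.ret t]) (by simp) fun a' t' m' ha' hopen' hnot => by
      obtain rfl : a' = a := by
        by_contra hne
        exact hnot (Finset.mem_erase.2 ⟨hne, mem_openCalls.2 hopen'⟩)
      rw [ha] at ha'
      cases ha'
      simp
  rw [Finset.sdiff_erase hcall, Finset.card_insert_of_notMem (by simp [hopen]),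
    card_callPositions_sdiff_openCalls hP hnl i] at htwo
  omega

end Counting

theorem unique_completed_insertion_methods
    (Γ : Type) (instD : DecidableEq Γ) (l : ℕ)
    (σ : Type) (Nfa : NFA (Γ ⊕ Fin l) σ)
    (tr : List (Label Γ l (l + 2)))
    (htr : IsTrace tr) (hnl : ¬ Linearizable tr (SpecN Nfa)) :
    ∀ i : Fin l,
      tr.countP (fun lb => match lb with
        | Label.call _ m => decide (m = insName i)
        | Label.ret _ => false) = 1 ∧
      ∀ (a : ℕ) (t : Fin (l + 2)), tr[a]? = some (Label.call t (insName i)) →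
        ∃ e : MEvent Γ l (l + 2), IsMEvent tr e ∧ e.callPos = a := by
  intro i
  have hP := htr.returnsFollowCalls
  have hdisj := disjoint_callPositions_openCalls hP hnl i
  refine ⟨?_, fun a t ha => ?_⟩
  · have hone := card_callPositions_sdiff_openCalls hP hnl i
    rw [Finset.sdiff_eq_self_of_disjoint hdisj] at hone
    exact (countP_eq_card_callPositions (fun _ _ => rfl) fun _ => rfl).trans hone
  · have hcall : a ∈ callPositions tr (insName i) :=
      Finset.mem_filter.2
        ⟨Finset.mem_range.2 (List.getElem?_eq_some_iff.1 ha).1, by rw [ha]; rfl⟩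
    obtain ⟨b, hb⟩ := hP.exists_isMEvent ha fun hopen =>
      Finset.disjoint_left.1 hdisj hcall (mem_openCalls.2 hopen)
    exact ⟨_, hb, rfl⟩

end Paper
end
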